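/- arXiv:1304.5715 — 9 statements merged into one kernel-verified Lean document; each statement's English description precedes it below -/
import Mathlib

section
/- Let a > 0 and define c(k) = B(k-1+a,a+2)/B(a,a+1). Define c(1,0) = 0 and for k ≥ 1, c(1,k) = c(1,k-1)·(a+k-1)/(k+3a+1) + c(k)·(a+k-1)/(k+3a+1). Then c(1,k) admits the closed form c(1,k) = ((a+1)Γ(2a+1)Γ(a+k))/(Γ(a)Γ(k+3a+2)) · Σ_{j=1}^{k} Γ(j+3a+1)/Γ(j+1+2a). -/
/-!
With `P k = (a+1) Γ(2a+1) Γ(a+k) / (Γ(a) Γ(k+3a+2))` the recurrence factor is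
`(a+k-1)/(k+3a+1) = P k / P (k-1)`, so dividing by `P k` turns the recurrence into a telescoping
sum: `c(1,k) / P k = c(1,k-1) / P (k-1) + c(k) / P (k-1)`. By the functional equation of `Γ`,
`c(k) / P (k-1) = Γ(k+3a+1) / Γ(k+1+2a)`.
-/

open Real Finset

noncomputable def betaF (x y : ℝ) : ℝ := Real.Gamma x * Real.Gamma y / Real.Gamma (x + y)

theorem eq_mul_sum_Icc_of_recurrence {K : Type*} [Field K] (x P w : ℕ → K)
    (hP : ∀ k, P k ≠ 0) (h0 : x 0 = 0)
    (hx : ∀ k, 1 ≤ k →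
      x k = x (k - 1) * (P k / P (k - 1)) + P (k - 1) * w k * (P k / P (k - 1))) :
    ∀ k, x k = P k * ∑ j ∈ Icc 1 k, w j := by
  intro k
  induction k with
  | zero => simp [h0]
  | succ n ih =>
    rw [hx (n + 1) n.succ_pos, Nat.add_sub_cancel, ih, sum_Icc_succ_top (by omega)]
    field_simp [hP n]

noncomputable def c1Prefactor (a : ℝ) (k : ℕ) : ℝ :=
  (a + 1) * Gamma (2 * a + 1) * Gamma (a + k) / (Gamma a * Gamma (k + 3 * a + 2))

noncomputable def c1Summand (a : ℝ) (j : ℕ) : ℝ :=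
  Gamma (j + 3 * a + 1) / Gamma (j + 1 + 2 * a)

section

variable {a : ℝ} (ha : 0 < a)
include ha

theorem c1Prefactor_pos (k : ℕ) : 0 < c1Prefactor a k := by
  unfold c1Prefactor
  have := Gamma_pos_of_pos ha
  have := Gamma_pos_of_pos (by positivity : 0 < 2 * a + 1)
  have := Gamma_pos_of_pos (by positivity : 0 < a + k)
  have := Gamma_pos_of_pos (by positivity : 0 < (k : ℝ) + 3 * a + 2)
  positivity

theorem c1Prefactor_div_pred {k : ℕ} (hk : 1 ≤ k) :
    c1Prefactor a k / c1Prefactor a (k - 1) = (a + k - 1) / (k + 3 * a + 1) := by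
  obtain ⟨n, rfl⟩ := Nat.exists_eq_add_of_le' hk
  rw [Nat.add_sub_cancel]
  unfold c1Prefactor
  have hG₁ : Gamma (a + (n + 1 : ℕ)) = (a + n) * Gamma (a + n) := by
    rw [← Gamma_add_one (by positivity)]; push_cast; ring_nf
  have hG₂ : Gamma ((n + 1 : ℕ) + 3 * a + 2) = (n + 3 * a + 2) * Gamma (n + 3 * a + 2) := by
    rw [← Gamma_add_one (by positivity)]; push_cast; ring_nf
  have := Gamma_pos_of_pos ha
  have := Gamma_pos_of_pos (by positivity : 0 < 2 * a + 1)
  have := Gamma_pos_of_pos (by positivity : 0 < a + n)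
  have := Gamma_pos_of_pos (by positivity : 0 < (n : ℝ) + 3 * a + 2)
  rw [hG₁, hG₂]
  push_cast
  field_simp
  ring

theorem c1Prefactor_pred_mul_c1Summand {k : ℕ} (hk : 1 ≤ k) :
    c1Prefactor a (k - 1) * c1Summand a k =
      betaF ((k : ℝ) - 1 + a) (a + 2) / betaF a (a + 1) := by
  obtain ⟨n, rfl⟩ := Nat.exists_eq_add_of_le' hk
  rw [Nat.add_sub_cancel]
  unfold c1Prefactor c1Summand betaF
  push_cast
  have hG₁ : Gamma (a + 2) = (a + 1) * Gamma (a + 1) := by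
    rw [← Gamma_add_one (by positivity)]; ring_nf
  rw [show (n : ℝ) + 1 + 3 * a + 1 = n + 3 * a + 2 by ring,
    show (n : ℝ) + 1 + 1 + 2 * a = n + 2 * a + 2 by ring,
    show (n : ℝ) + 1 - 1 + a + (a + 2) = n + 2 * a + 2 by ring,
    show (n : ℝ) + 1 - 1 + a = a + n by ring, show a + (a + 1) = 2 * a + 1 by ring, hG₁]
  have := Gamma_pos_of_pos ha
  have := Gamma_pos_of_pos (by positivity : 0 < a + 1)
  have := Gamma_pos_of_pos (by positivity : 0 < 2 * a + 1)
  have := Gamma_pos_of_pos (by positivity : 0 < (n : ℝ) + 3 * a + 2)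
  have := Gamma_pos_of_pos (by positivity : 0 < (n : ℝ) + 2 * a + 2)
  field_simp

end

theorem c1k_closed_form (a : ℝ) (ha : 0 < a) (c1 : ℕ → ℝ)
    (h0 : c1 0 = 0)
    (hrec : ∀ k : ℕ, 1 ≤ k →
      c1 k = c1 (k - 1) * ((a + (k : ℝ) - 1) / ((k : ℝ) + 3 * a + 1)) +
        (betaF ((k : ℝ) - 1 + a) (a + 2) / betaF a (a + 1)) *
          ((a + (k : ℝ) - 1) / ((k : ℝ) + 3 * a + 1))) :
    ∀ k : ℕ, 1 ≤ k →
      c1 k = ((a + 1) * Real.Gamma (2 * a + 1) * Real.Gamma (a + (k : ℝ))) /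
          (Real.Gamma a * Real.Gamma ((k : ℝ) + 3 * a + 2)) *
        ∑ j ∈ Finset.Icc 1 k,
          Real.Gamma ((j : ℝ) + 3 * a + 1) / Real.Gamma ((j : ℝ) + 1 + 2 * a) := by
  refine fun k _ => eq_mul_sum_Icc_of_recurrence c1 (c1Prefactor a) (c1Summand a)
    (fun k => (c1Prefactor_pos ha k).ne') h0 (fun k hk => ?_) k
  rw [c1Prefactor_div_pred ha hk, c1Prefactor_pred_mul_c1Summand ha hk]
  exact hrec k hk
end

section
/- Let a > 0 and let c(1,k) be defined as in the Buckley–Osthus model recurrence (c(1,k) = c(1,k-1)(a+k-1)/(k+3a+1) + c(k)(a+k-1)/(k+3a+1), c(1,0)=0, with c(k)=B(k-1+a,a+2)/B(a,a+1)). Then c(1,k) = (Γ(2a+1)/Γ(a)) · k^{-(a+1)} · (1 + O(1/k)) as k → ∞. -/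
open Real

/-!
Unwinding the recurrence gives the closed form
`c(1,k) = Γ(2a+1)/Γ(a) · Γ(k+a)/Γ(k+2a+1) - Γ(3a+2)/Γ(a) · Γ(k+a)/Γ(k+3a+2)`.
For `s ≥ 1`, log-convexity of `Γ` squeezes the secant slope of `log Γ` over `[y, y+s]` between
its slopes over the unit intervals at the two ends, which are `log y` and `log (y+s-1)`; hence
`(y+s-1)^(-s) ≤ Γ(y)/Γ(y+s) ≤ y^(-s)`. With `y = k + a` the first term of the closed form is
`Γ(2a+1)/Γ(a) · k^(-(a+1)) · (1 + O(1/k))` and the second is `O(k^(-(2a+2)))`.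
-/

namespace Real

theorem rpow_mul_Gamma_le_Gamma_add {x s : ℝ} (hx : 0 < x) (hs : 1 ≤ s) :
    x ^ s * Gamma x ≤ Gamma (x + s) := by
  have hslope := convexOn_log_Gamma.secant_mono (a := x) (x := x + 1) (y := x + s) hx
    (by simp only [Set.mem_Ioi]; linarith) (by simp only [Set.mem_Ioi]; linarith)
    (by linarith) (by linarith) (by linarith)
  simp only [Function.comp_apply, Gamma_add_one hx.ne', add_sub_cancel_left, div_one,
    log_mul hx.ne' (Gamma_pos_of_pos hx).ne', add_sub_cancel_right] at hslope
  rw [le_div_iff₀ (by linarith)] at hslope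
  rw [← exp_log (Gamma_pos_of_pos (by linarith : 0 < x + s)), rpow_def_of_pos hx,
    ← exp_log (Gamma_pos_of_pos hx), ← exp_add]
  exact exp_le_exp.2 (by linarith)

theorem Gamma_add_le_rpow_mul_Gamma {x s : ℝ} (hx : 0 < x) (hs : 1 ≤ s) :
    Gamma (x + s) ≤ (x + s - 1) ^ s * Gamma x := by
  obtain ⟨y, rfl⟩ : ∃ y, s = y - x + 1 := ⟨x + s - 1, by ring⟩
  have hy : 0 < y := by linarith
  have hΓy := Gamma_pos_of_pos hy
  rw [show x + (y - x + 1) = y + 1 by ring, show y + 1 - 1 = y by ring]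
  have hslope := convexOn_log_Gamma.secant_mono (a := y + 1) (x := x) (y := y)
    (by simp only [Set.mem_Ioi]; linarith) hx hy (by linarith) (by linarith) (by linarith)
  simp only [Function.comp_apply, Gamma_add_one hy.ne', log_mul hy.ne' hΓy.ne'] at hslope
  have hslope' : (log (Gamma y) + log y - log (Gamma x)) / (y - x + 1) ≤ log y := by
    calc _ = (log (Gamma x) - (log y + log (Gamma y))) / (x - (y + 1)) := by
          rw [show x - (y + 1) = -(y - x + 1) by ring, div_neg]; ring
      _ ≤ _ := hslope
      _ = log y := by rw [show y - (y + 1) = -1 by ring]; ring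
  rw [div_le_iff₀ (by linarith)] at hslope'
  rw [← exp_log (Gamma_pos_of_pos (by linarith : 0 < y + 1)), Gamma_add_one hy.ne',
    log_mul hy.ne' hΓy.ne', rpow_def_of_pos hy, ← exp_log (Gamma_pos_of_pos hx), ← exp_add]
  exact exp_le_exp.2 (by linarith)

theorem rpow_neg_mul_one_sub_le_rpow_neg_add {x b s : ℝ} (hx : 0 < x) (hb : 0 ≤ b)
    (hs : 1 ≤ s) : x ^ (-s) * (1 - s * b / x) ≤ (x + b) ^ (-s) := by
  have hxb : 0 < x + b := by linarith
  have hbernoulli := one_add_mul_self_le_rpow_one_add (s := -(b / (x + b)))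
    (by rw [neg_le_neg_iff, div_le_one hxb]; linarith) hs
  have hshift : (x + b) ^ (-s) = x ^ (-s) * (1 + -(b / (x + b))) ^ s := by
    rw [show 1 + -(b / (x + b)) = x / (x + b) by field_simp; ring, div_rpow hx.le hxb.le,
      rpow_neg hx.le, rpow_neg hxb.le]
    field_simp
  rw [hshift]
  gcongr
  calc 1 - s * b / x ≤ 1 - s * (b / (x + b)) := by
        rw [mul_div_assoc]
        gcongr 1 - s * ?_
        exact div_le_div_of_nonneg_left hb hx (by linarith)
    _ = 1 + s * -(b / (x + b)) := by ring
    _ ≤ _ := hbernoulli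

theorem rpow_neg_le_rpow_neg_div_self {x s t : ℝ} (hx : 1 ≤ x) (hst : s + 1 ≤ t) :
    x ^ (-t) ≤ x ^ (-s) / x := by
  rw [← rpow_sub_one (by linarith)]
  exact rpow_le_rpow_of_exponent_le hx (by linarith)

theorem Gamma_add_div_Gamma_add_add_mem_Icc {x b s : ℝ} (hx : 0 < x) (hb : 0 ≤ b)
    (hs : 1 ≤ s) :
    Gamma (x + b) / Gamma (x + b + s) ∈
      Set.Icc (x ^ (-s) * (1 - s * (b + s - 1) / x)) (x ^ (-s)) := by
  have hy : 0 < x + b := by linarith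
  have hΓys := Gamma_pos_of_pos (by linarith : 0 < x + b + s)
  constructor
  · calc x ^ (-s) * (1 - s * (b + s - 1) / x) ≤ (x + (b + s - 1)) ^ (-s) :=
          rpow_neg_mul_one_sub_le_rpow_neg_add hx (by linarith) hs
      _ = ((x + b + s - 1) ^ s)⁻¹ := by rw [rpow_neg (by linarith)]; ring_nf
      _ ≤ Gamma (x + b) / Gamma (x + b + s) := by
          rw [inv_le_iff_one_le_mul₀' (rpow_pos_of_pos (by linarith) _), ← mul_div_assoc,
            one_le_div hΓys]
          exact Gamma_add_le_rpow_mul_Gamma hy hs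
  · calc Gamma (x + b) / Gamma (x + b + s) ≤ (x + b) ^ (-s) := by
          rw [rpow_neg hy.le, div_le_iff₀ hΓys, inv_mul_eq_div,
            le_div_iff₀ (rpow_pos_of_pos hy _), mul_comm]
          exact rpow_mul_Gamma_le_Gamma_add hy hs
      _ ≤ x ^ (-s) := rpow_le_rpow_of_nonpos hx (by linarith) (by linarith)

end Real

theorem betaF_add_div_betaF {a : ℝ} (ha : 0 < a) (y : ℝ) :
    betaF (y + a) (a + 2) / betaF a (a + 1) =
      (a + 1) * (Gamma (2 * a + 1) / Gamma a) * (Gamma (y + a) / Gamma (y + a + (a + 2))) := by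
  have hΓa := (Gamma_pos_of_pos ha).ne'
  have hΓa₁ := (Gamma_pos_of_pos (by linarith : 0 < a + 1)).ne'
  have hΓ2a := (Gamma_pos_of_pos (by linarith : 0 < 2 * a + 1)).ne'
  rw [betaF, betaF, show a + (a + 1) = 2 * a + 1 by ring, show a + 2 = a + 1 + 1 by ring,
    Gamma_add_one (s := a + 1) (by linarith)]
  field_simp

theorem abs_mul_sub_mul_sub_mul_le {A B G H u e f : ℝ} (hA : 0 ≤ A) (hB : 0 ≤ B)
    (hG : G ∈ Set.Icc (u - e) u) (hH : H ∈ Set.Icc 0 f) :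
    |A * G - B * H - A * u| ≤ A * e + B * f := by
  obtain ⟨hG₁, hG₂⟩ := hG
  obtain ⟨hH₁, hH₂⟩ := hH
  rw [abs_le]
  constructor <;> nlinarith [mul_le_mul_of_nonneg_left hG₁ hA, mul_le_mul_of_nonneg_left hG₂ hA,
    mul_le_mul_of_nonneg_left hH₁ hB, mul_le_mul_of_nonneg_left hH₂ hB]

theorem eq_Gamma_div_sub_Gamma_div_of_rec {a : ℝ} (ha : 0 < a) {c1 : ℕ → ℝ}
    (h0 : c1 0 = 0)
    (hrec : ∀ k : ℕ, 1 ≤ k →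
      c1 k = c1 (k - 1) * ((a + (k : ℝ) - 1) / ((k : ℝ) + 3 * a + 1)) +
        (betaF ((k : ℝ) - 1 + a) (a + 2) / betaF a (a + 1)) *
          ((a + (k : ℝ) - 1) / ((k : ℝ) + 3 * a + 1))) (k : ℕ) :
    c1 k = Gamma (2 * a + 1) / Gamma a * (Gamma (k + a) / Gamma (k + a + (a + 1))) -
      Gamma (3 * a + 2) / Gamma a * (Gamma (k + a) / Gamma (k + a + (2 * a + 2))) := by
  have hΓa := (Gamma_pos_of_pos ha).ne'
  induction k with
  | zero =>
    rw [h0, Nat.cast_zero, zero_add, show a + (a + 1) = 2 * a + 1 by ring,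
      show a + (2 * a + 2) = 3 * a + 2 by ring]
    have := (Gamma_pos_of_pos (by linarith : 0 < 2 * a + 1)).ne'
    have := (Gamma_pos_of_pos (by linarith : 0 < 3 * a + 2)).ne'
    field_simp
    ring
  | succ m ih =>
    have hrec_m := hrec (m + 1) (by omega)
    rw [Nat.add_sub_cancel, ih, Nat.cast_succ, add_sub_cancel_right,
      betaF_add_div_betaF ha] at hrec_m
    set x : ℝ := (m : ℝ)
    have hx : 0 ≤ x := Nat.cast_nonneg m
    have hΓx := (Gamma_pos_of_pos (by linarith : 0 < x + a)).ne'
    have hΓx₁ := (Gamma_pos_of_pos (by linarith : 0 < x + a + (a + 1))).ne'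
    have hΓx₂ := (Gamma_pos_of_pos (by linarith : 0 < x + a + (2 * a + 2))).ne'
    rw [Nat.cast_succ, hrec_m, show x + 1 + a = x + a + 1 by ring,
      show x + a + 1 + (a + 1) = x + a + (a + 1) + 1 by ring,
      show x + a + 1 + (2 * a + 2) = x + a + (2 * a + 2) + 1 by ring,
      show x + a + (a + 2) = x + a + (a + 1) + 1 by ring,
      Gamma_add_one (s := x + a) (by linarith), Gamma_add_one (s := x + a + (a + 1)) (by linarith),
      Gamma_add_one (s := x + a + (2 * a + 2)) (by linarith)]
    field_simp
    ring

theorem c1k_asymptotic (a : ℝ) (ha : 0 < a) (c1 : ℕ → ℝ)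
    (h0 : c1 0 = 0)
    (hrec : ∀ k : ℕ, 1 ≤ k →
      c1 k = c1 (k - 1) * ((a + (k : ℝ) - 1) / ((k : ℝ) + 3 * a + 1)) +
        (betaF ((k : ℝ) - 1 + a) (a + 2) / betaF a (a + 1)) *
          ((a + (k : ℝ) - 1) / ((k : ℝ) + 3 * a + 1))) :
    ∃ C > 0, ∀ k : ℕ, 1 ≤ k →
      |c1 k - Real.Gamma (2 * a + 1) / Real.Gamma a * (k : ℝ) ^ (-(a + 1))| ≤
        C * (k : ℝ) ^ (-(a + 1)) / (k : ℝ) := by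
  have hA : 0 < Gamma (2 * a + 1) / Gamma a :=
    div_pos (Gamma_pos_of_pos (by linarith)) (Gamma_pos_of_pos ha)
  have hB : 0 < Gamma (3 * a + 2) / Gamma a :=
    div_pos (Gamma_pos_of_pos (by linarith)) (Gamma_pos_of_pos ha)
  refine ⟨Gamma (2 * a + 1) / Gamma a * (2 * a * (a + 1)) + Gamma (3 * a + 2) / Gamma a,
    by positivity, fun k hk => ?_⟩
  have hk₁ : (1 : ℝ) ≤ k := by exact_mod_cast hk
  have hk₀ : (0 : ℝ) < k := by linarith
  obtain ⟨hG₁, hG₂⟩ :=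
    Gamma_add_div_Gamma_add_add_mem_Icc hk₀ ha.le (s := a + 1) (by linarith)
  have hH := (Gamma_add_div_Gamma_add_add_mem_Icc hk₀ ha.le (s := 2 * a + 2) (by linarith)).2
    |>.trans (rpow_neg_le_rpow_neg_div_self hk₁ (s := a + 1) (by linarith))
  rw [eq_Gamma_div_sub_Gamma_div_of_rec ha h0 hrec k]
  refine (abs_mul_sub_mul_sub_mul_le (e := 2 * a * (a + 1) * (k : ℝ) ^ (-(a + 1)) / k) hA.le hB.le
    ⟨le_of_eq_of_le (by ring) hG₁, hG₂⟩ ⟨by positivity, hH⟩).trans_eq (by ring)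
end

section
/- Let a > 0 and define the double sequence c(l,k) for l,k ≥ 0 by: c(l,0) = c(0,k) = 0; c(1,k) = c(1,k-1)(a+k-1)/(k+3a+1) + c(k)(a+k-1)/(k+3a+1) for k > 0, where c(k) = B(k-1+a,a+2)/B(a,a+1); and c(l,k) = c(l,k-1)(al+k-1)/(l(1+a)+k+2a) + c(l-1,k)(l-2+a)/(l(1+a)+k+2a) for l > 1, k > 0. Then for every p > 1, with q = min{a,1}(p-1)/p, there exists a constant C̃ such that c(l,k) ≤ C̃ p^k/(1+q)^l for all l, k ≥ 1. -/
/-!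
Row `l = 1` grows at most linearly, `c(1,k) ≤ k c(1)`: the sequence `c(k)` is nonincreasing,
since `B(x+1,y) = B(x,y) x/(x+y)`, and the coefficient `(a+k-1)/(k+3a+1)` lies in `[0,1]`.
Bernoulli's inequality turns this into `c(1,k) ≤ C p^k/(1+q)`. Each later row is controlled by
the previous one: if `c(l,k) ≤ Y (1+q) p^k` for all `k`, then induction on `k` gives
`c(l+1,k) ≤ Y p^k`, because the two coefficients `s, t` of the recurrence satisfy
`s + p(1+q) t ≤ p`, and this is where `p(1+q) = p + min(a,1)(p-1)` is needed.
-/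

open Real

lemma betaF_pos {x y : ℝ} (hx : 0 < x) (hy : 0 < y) : 0 < betaF x y :=
  div_pos (mul_pos (Gamma_pos_of_pos hx) (Gamma_pos_of_pos hy)) (Gamma_pos_of_pos (by linarith))

lemma betaF_add_one_left {x y : ℝ} (hx : 0 < x) (hy : 0 < y) :
    betaF (x + 1) y = betaF x y * (x / (x + y)) := by
  have hxy : 0 < x + y := by linarith
  have hG : Gamma (x + y) ≠ 0 := (Gamma_pos_of_pos hxy).ne'
  unfold betaF
  rw [Gamma_add_one hx.ne', show x + 1 + y = x + y + 1 by ring, Gamma_add_one hxy.ne']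
  field_simp

lemma betaF_add_one_left_le {x y : ℝ} (hx : 0 < x) (hy : 0 < y) :
    betaF (x + 1) y ≤ betaF x y := by
  rw [betaF_add_one_left hx hy]
  exact mul_le_of_le_one_right (betaF_pos hx hy).le
    ((div_le_one (by linarith)).2 (by linarith))

lemma betaF_add_nat_left_le {x y : ℝ} (hx : 0 < x) (hy : 0 < y) (n : ℕ) :
    betaF (x + n) y ≤ betaF x y := by
  induction n with
  | zero => simp
  | succ n ih =>
    have hxn : 0 < x + n := by positivity
    calc betaF (x + ↑(n + 1)) y = betaF (x + n + 1) y := by push_cast; ring_nf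
      _ ≤ betaF (x + n) y := betaF_add_one_left_le hxn hy
      _ ≤ betaF x y := ih

lemma le_nat_mul_of_rec {u β r : ℕ → ℝ} {B : ℝ} (hB : 0 ≤ B) (h0 : u 0 = 0)
    (hβ : ∀ k, β k ≤ B) (hr0 : ∀ k, 0 ≤ r k) (hr1 : ∀ k, r k ≤ 1)
    (hu : ∀ k, u (k + 1) = u k * r k + β k * r k) (k : ℕ) : u k ≤ k * B := by
  induction k with
  | zero => simp [h0]
  | succ k ih =>
    have hsum : u k + β k ≤ (k + 1 : ℕ) * B := by push_cast; linarith [hβ k]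
    calc u (k + 1) = (u k + β k) * r k := by rw [hu, add_mul]
      _ ≤ (k + 1 : ℕ) * B * r k := mul_le_mul_of_nonneg_right hsum (hr0 k)
      _ ≤ (k + 1 : ℕ) * B := mul_le_of_le_one_right (by positivity) (hr1 k)

lemma nat_mul_le_div_mul_pow {p B : ℝ} (hp : 1 < p) (hB : 0 ≤ B) (k : ℕ) :
    k * B ≤ B / (p - 1) * p ^ k := by
  have hp1 : 0 < p - 1 := by linarith
  have hbern : 1 + k * (p - 1) ≤ p ^ k := one_add_mul_sub_le_pow (by linarith) k
  rw [div_mul_eq_mul_div, le_div_iff₀ hp1]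
  nlinarith

lemma le_mul_pow_of_rec {u v s t : ℕ → ℝ} {Y σ p : ℝ} (hY : 0 ≤ Y) (hp : 0 ≤ p)
    (h0 : u 0 = 0) (hv : ∀ k, v k ≤ Y * σ * p ^ k)
    (hs : ∀ k, 0 ≤ s k) (ht : ∀ k, 0 ≤ t k)
    (hst : ∀ k, s k + p * σ * t k ≤ p) (hu : ∀ k, u (k + 1) = u k * s k + v (k + 1) * t k)
    (k : ℕ) : u k ≤ Y * p ^ k := by
  induction k with
  | zero => simpa [h0] using hY
  | succ k ih =>
    calc u (k + 1) = u k * s k + v (k + 1) * t k := hu k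
      _ ≤ Y * p ^ k * s k + Y * σ * p ^ (k + 1) * t k := by
        gcongr
        · exact hs k
        · exact ht k
        · exact hv (k + 1)
      _ = Y * p ^ k * (s k + p * σ * t k) := by ring
      _ ≤ Y * p ^ k * p := mul_le_mul_of_nonneg_left (hst k) (by positivity)
      _ = Y * p ^ (k + 1) := by ring

lemma rec_coeff_le {a m p σ L K : ℝ} (ha : 0 ≤ a) (hma : m ≤ a) (hm1 : m ≤ 1) (hp : 1 < p)
    (hσ : p * σ ≤ p + m * (p - 1)) (hL : 2 ≤ L) (hK : 1 ≤ K) :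
    (a * L + K - 1) / (L * (1 + a) + K + 2 * a) +
      p * σ * ((L - 2 + a) / (L * (1 + a) + K + 2 * a)) ≤ p := by
  have hD : 0 < L * (1 + a) + K + 2 * a := by nlinarith
  have hp1 : 0 ≤ p - 1 := by linarith
  rw [mul_div_assoc', ← add_div, div_le_iff₀ hD]
  nlinarith [mul_le_mul_of_nonneg_right hσ (by linarith : (0 : ℝ) ≤ L - 2 + a),
    mul_nonneg (mul_nonneg hp1 (sub_nonneg.2 hma)) (by linarith : (0 : ℝ) ≤ L - 2),
    mul_nonneg (mul_nonneg hp1 (sub_nonneg.2 hm1)) ha,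
    mul_nonneg hp1 (by linarith : (0 : ℝ) ≤ K),
    mul_nonneg hp1 ha, mul_nonneg hp1 (by linarith : (0 : ℝ) ≤ L)]

section Recurrence

variable {a : ℝ} {c : ℕ → ℕ → ℝ}

lemma c_one_le (ha : 0 < a) (h00 : ∀ l : ℕ, c l 0 = 0)
    (h1 : ∀ k : ℕ, 1 ≤ k →
      c 1 k = c 1 (k - 1) * ((a + (k : ℝ) - 1) / ((k : ℝ) + 3 * a + 1)) +
        (betaF ((k : ℝ) - 1 + a) (a + 2) / betaF a (a + 1)) *
          ((a + (k : ℝ) - 1) / ((k : ℝ) + 3 * a + 1)))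
    (k : ℕ) : c 1 k ≤ k * (betaF a (a + 2) / betaF a (a + 1)) := by
  have hB1 : 0 < betaF a (a + 1) := betaF_pos ha (by linarith)
  refine le_nat_mul_of_rec (β := fun k => betaF ((k + 1 : ℕ) - 1 + a) (a + 2) / betaF a (a + 1))
    (r := fun k => (a + ((k + 1 : ℕ) : ℝ) - 1) / ((k + 1 : ℕ) + 3 * a + 1))
    (div_nonneg (betaF_pos ha (by linarith)).le hB1.le) (h00 1) (fun k => ?_) (fun k => ?_)
    (fun k => ?_) (fun k => by simpa using h1 (k + 1) (by omega)) k
  · have hk : ((k + 1 : ℕ) : ℝ) - 1 + a = a + k := by push_cast; ring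
    simp only [hk]
    gcongr
    exact betaF_add_nat_left_le ha (by linarith) k
  · push_cast; apply div_nonneg <;> linarith
  · push_cast; rw [div_le_one (by linarith)]; linarith

lemma c_succ_le (ha : 0 < a) (h00 : ∀ l : ℕ, c l 0 = 0)
    (hl : ∀ l k : ℕ, 2 ≤ l → 1 ≤ k →
      c l k = c l (k - 1) *
          ((a * (l : ℝ) + (k : ℝ) - 1) / ((l : ℝ) * (1 + a) + (k : ℝ) + 2 * a)) +
        c (l - 1) k *
          (((l : ℝ) - 2 + a) / ((l : ℝ) * (1 + a) + (k : ℝ) + 2 * a)))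
    {m p σ : ℝ} (hma : m ≤ a) (hm1 : m ≤ 1) (hp : 1 < p) (hσ : p * σ ≤ p + m * (p - 1))
    {l : ℕ} (hl1 : 1 ≤ l) {Y : ℝ} (hY : 0 ≤ Y) (hrow : ∀ k, c l k ≤ Y * σ * p ^ k)
    (k : ℕ) :
    c (l + 1) k ≤ Y * p ^ k := by
  have hL : (1 : ℝ) ≤ l := by exact_mod_cast hl1
  have hD : ∀ k : ℕ, 0 < ((l : ℝ) + 1) * (1 + a) + ((k : ℝ) + 1) + 2 * a := fun k => by
    positivity
  refine le_mul_pow_of_rec hY (by linarith) (h00 _) hrow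
    (fun k => div_nonneg (by nlinarith) (hD k).le) (fun k => div_nonneg (by linarith) (hD k).le)
    (fun k => rec_coeff_le ha.le hma hm1 hp hσ (by linarith) (by simp))
    (fun k => by simpa using hl (l + 1) (k + 1) (by omega) (by omega)) k

end Recurrence

theorem clk_exponential_bound_general (a : ℝ) (ha : 0 < a) (c : ℕ → ℕ → ℝ)
    (h00 : ∀ l : ℕ, c l 0 = 0)
    (h1 : ∀ k : ℕ, 1 ≤ k →
      c 1 k = c 1 (k - 1) * ((a + (k : ℝ) - 1) / ((k : ℝ) + 3 * a + 1)) +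
        (betaF ((k : ℝ) - 1 + a) (a + 2) / betaF a (a + 1)) *
          ((a + (k : ℝ) - 1) / ((k : ℝ) + 3 * a + 1)))
    (hl : ∀ l k : ℕ, 2 ≤ l → 1 ≤ k →
      c l k = c l (k - 1) *
          ((a * (l : ℝ) + (k : ℝ) - 1) / ((l : ℝ) * (1 + a) + (k : ℝ) + 2 * a)) +
        c (l - 1) k *
          (((l : ℝ) - 2 + a) / ((l : ℝ) * (1 + a) + (k : ℝ) + 2 * a))) :
    ∀ p : ℝ, 1 < p → ∃ C : ℝ,
      ∀ l k : ℕ, 1 ≤ l → 1 ≤ k →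
        c l k ≤ C * p ^ (k : ℝ) / (1 + min a 1 * (p - 1) / p) ^ (l : ℝ) := by
  intro p hp
  set σ := 1 + min a 1 * (p - 1) / p
  have hp1 : 0 < p - 1 := by linarith
  have hσ : 0 < σ := by
    have : 0 < min a 1 := lt_min ha one_pos
    positivity
  set B := betaF a (a + 2) / betaF a (a + 1)
  have hB : 0 ≤ B := (div_pos (betaF_pos ha (by linarith)) (betaF_pos ha (by linarith))).le
  have hpσ : p * σ = p + min a 1 * (p - 1) := by
    simp only [σ]; field_simp
  clear_value σ
  have hrows : ∀ l, 1 ≤ l → ∀ k, c l k ≤ B * σ / (p - 1) / σ ^ l * p ^ k := by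
    intro l hl1
    induction l, hl1 using Nat.le_induction with
    | base =>
      intro k
      refine (c_one_le ha h00 h1 k).trans ((nat_mul_le_div_mul_pow hp hB k).trans_eq ?_)
      field_simp
    | succ l hl1 ih =>
      refine c_succ_le ha h00 hl (min_le_left _ _) (min_le_right _ _) hp hpσ.le hl1
        (by positivity) fun k => (ih k).trans_eq ?_
      rw [pow_succ]; field_simp
  refine ⟨B * σ / (p - 1), fun l k hl1 _ => ?_⟩
  rw [rpow_natCast, rpow_natCast, mul_div_right_comm]
  exact hrows l hl1 k

theorem clk_exponential_bound (a : ℝ) (ha : 0 < a) (c : ℕ → ℕ → ℝ)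
    (h00 : ∀ l : ℕ, c l 0 = 0) (h0k : ∀ k : ℕ, c 0 k = 0)
    (h1 : ∀ k : ℕ, 1 ≤ k →
      c 1 k = c 1 (k - 1) * ((a + (k : ℝ) - 1) / ((k : ℝ) + 3 * a + 1)) +
        (betaF ((k : ℝ) - 1 + a) (a + 2) / betaF a (a + 1)) *
          ((a + (k : ℝ) - 1) / ((k : ℝ) + 3 * a + 1)))
    (hl : ∀ l k : ℕ, 2 ≤ l → 1 ≤ k →
      c l k = c l (k - 1) *
          ((a * (l : ℝ) + (k : ℝ) - 1) / ((l : ℝ) * (1 + a) + (k : ℝ) + 2 * a)) +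
        c (l - 1) k *
          (((l : ℝ) - 2 + a) / ((l : ℝ) * (1 + a) + (k : ℝ) + 2 * a))) :
    ∀ p : ℝ, 1 < p → ∃ C : ℝ,
      ∀ l k : ℕ, 1 ≤ l → 1 ≤ k →
        c l k ≤ C * p ^ (k : ℝ) / (1 + min a 1 * (p - 1) / p) ^ (l : ℝ) :=
  clk_exponential_bound_general a ha c h00 h1 hl
end

section
/- With c(l,k) defined by the Buckley–Osthus recurrences (as in the previous context, parameter a > 0), for every natural number N and every k ≥ 1, the series Σ_{l=1}^{∞} l^N c(l,k) converges. -/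
/-!
For `l ≥ 2` the two weights of the recurrence lie in `[0, 1]` and `[0, ρ]` with
`ρ = (2 + a) / (2 + 2a) < 1`, so `|c l k| ≤ |c l (k - 1)| + ρ |c (l - 1) k|`. Induction on `k`
and then on `l` turns this into `|c l k| ≤ M (l + 1)^k ρ^l`, and polynomial times geometric
is summable.
-/

open Real

theorem add_one_pow_add_pow_succ_le {x : ℝ} (hx : 0 ≤ x) (k : ℕ) :
    (x + 1) ^ k + x ^ (k + 1) ≤ (x + 1) ^ (k + 1) := by
  have : x ^ k ≤ (x + 1) ^ k := pow_le_pow_left₀ hx (by linarith) k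
  calc (x + 1) ^ k + x ^ (k + 1) = (x + 1) ^ k + x * x ^ k := by ring
    _ ≤ (x + 1) ^ k + x * (x + 1) ^ k := by gcongr
    _ = (x + 1) ^ (k + 1) := by ring

theorem summable_add_one_pow_mul_geometric {r : ℝ} (hr0 : 0 < r) (hr1 : r < 1) (k : ℕ) :
    Summable fun n : ℕ => ((n : ℝ) + 1) ^ k * r ^ n := by
  have hshift : Summable fun n : ℕ => ((n + 1 : ℕ) : ℝ) ^ k * r ^ (n + 1) :=
    (summable_nat_add_iff (f := fun n : ℕ => (n : ℝ) ^ k * r ^ n) 1).mpr <|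
      summable_pow_mul_geometric_of_norm_lt_one k (by rwa [norm_of_nonneg hr0.le])
  refine (hshift.mul_left r⁻¹).congr fun n => ?_
  rw [Nat.cast_succ, pow_succ]
  field_simp

theorem summable_pow_mul_of_abs_le_add_one_pow_mul_geometric {r M : ℝ} {k : ℕ} {f : ℕ → ℝ}
    (hr0 : 0 < r) (hr1 : r < 1) (hf : ∀ l, |f l| ≤ M * ((l : ℝ) + 1) ^ k * r ^ l) (N : ℕ) :
    Summable fun l : ℕ => (l : ℝ) ^ N * f l := by
  refine ((summable_add_one_pow_mul_geometric hr0 hr1 (N + k)).mul_left M).of_norm_bounded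
    fun l => ?_
  rw [norm_mul, norm_pow, norm_of_nonneg (Nat.cast_nonneg l), norm_eq_abs]
  calc (l : ℝ) ^ N * |f l| ≤ ((l : ℝ) + 1) ^ N * (M * ((l : ℝ) + 1) ^ k * r ^ l) := by
        gcongr
        · linarith
        · exact hf l
    _ = M * (((l : ℝ) + 1) ^ (N + k) * r ^ l) := by ring

section PascalBound

variable {ρ : ℝ}

theorem abs_le_add_one_pow_succ_mul_geometric {M : ℝ} {k : ℕ} {b e : ℕ → ℝ}
    (hρ : 0 ≤ ρ) (hM : 0 ≤ M) (hb : ∀ l, |b l| ≤ M * ((l : ℝ) + 1) ^ k * ρ ^ l)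
    (he0 : |e 0| ≤ M) (he1 : |e 1| ≤ M * ρ)
    (hrec : ∀ l, |e (l + 2)| ≤ |b (l + 2)| + ρ * |e (l + 1)|) (l : ℕ) :
    |e l| ≤ M * ((l : ℝ) + 1) ^ (k + 1) * ρ ^ l := by
  induction l using Nat.twoStepInduction with
  | zero => simpa using he0
  | one =>
    calc |e 1| ≤ M * 1 * ρ ^ 1 := by simpa using he1
      _ ≤ M * (((1 : ℕ) : ℝ) + 1) ^ (k + 1) * ρ ^ 1 := by
        gcongr
        norm_num [one_le_pow₀]
  | more n _ ih =>
    set x : ℝ := (n : ℝ) + 2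
    have hx : ((n + 2 : ℕ) : ℝ) = x := by push_cast; rfl
    have hx' : ((n + 1 : ℕ) : ℝ) + 1 = x := by push_cast; ring
    rw [hx]
    rw [hx'] at ih
    calc |e (n + 2)| ≤ M * (x + 1) ^ k * ρ ^ (n + 2) + ρ * (M * x ^ (k + 1) * ρ ^ (n + 1)) := by
          have hbn := hb (n + 2)
          rw [hx] at hbn
          linarith [hrec n, mul_le_mul_of_nonneg_left ih hρ]
      _ = M * ((x + 1) ^ k + x ^ (k + 1)) * ρ ^ (n + 2) := by ring
      _ ≤ M * (x + 1) ^ (k + 1) * ρ ^ (n + 2) := by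
        gcongr
        exact add_one_pow_add_pow_succ_le (by positivity) k

theorem exists_abs_le_add_one_pow_mul_geometric {c : ℕ → ℕ → ℝ} (hρ : 0 < ρ)
    (h0 : ∀ l, c l 0 = 0)
    (hrec : ∀ l k, |c (l + 2) (k + 1)| ≤ |c (l + 2) k| + ρ * |c (l + 1) (k + 1)|) (k : ℕ) :
    ∃ M, ∀ l, |c l k| ≤ M * ((l : ℝ) + 1) ^ k * ρ ^ l := by
  induction k with
  | zero => exact ⟨0, fun l => by simp [h0]⟩
  | succ k ih =>
    obtain ⟨M, hM⟩ := ih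
    set M' := max M (max |c 0 (k + 1)| (|c 1 (k + 1)| / ρ))
    have hMM' : M ≤ M' := le_max_left _ _
    have hc0 : |c 0 (k + 1)| ≤ M' := (le_max_left _ _).trans (le_max_right _ _)
    have hc1 : |c 1 (k + 1)| / ρ ≤ M' := (le_max_right _ _).trans (le_max_right _ _)
    have hM' (l : ℕ) : |c l k| ≤ M' * ((l : ℝ) + 1) ^ k * ρ ^ l := by
      refine (hM l).trans ?_
      gcongr
    exact ⟨M', abs_le_add_one_pow_succ_mul_geometric hρ.le ((abs_nonneg _).trans hc0) hM' hc0
      ((div_le_iff₀ hρ).mp hc1) (hrec · k)⟩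

end PascalBound

theorem abs_mul_add_mul_weights_le {a l k : ℝ} (ha : 0 < a) (hl : 2 ≤ l) (hk : 1 ≤ k)
    (x y : ℝ) :
    |x * ((a * l + k - 1) / (l * (1 + a) + k + 2 * a)) +
        y * ((l - 2 + a) / (l * (1 + a) + k + 2 * a))| ≤
      |x| + (2 + a) / (2 + 2 * a) * |y| := by
  have hD : 0 < l * (1 + a) + k + 2 * a := by nlinarith
  have hp0 : 0 ≤ (a * l + k - 1) / (l * (1 + a) + k + 2 * a) := by
    apply div_nonneg _ hD.le; nlinarith
  have hp1 : (a * l + k - 1) / (l * (1 + a) + k + 2 * a) ≤ 1 := by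
    rw [div_le_one hD]; nlinarith
  have hq0 : 0 ≤ (l - 2 + a) / (l * (1 + a) + k + 2 * a) := by
    apply div_nonneg _ hD.le; linarith
  have hqρ : (l - 2 + a) / (l * (1 + a) + k + 2 * a) ≤ (2 + a) / (2 + 2 * a) := by
    rw [div_le_div_iff₀ hD (by linarith)]
    nlinarith [mul_nonneg ha.le (by linarith : (0 : ℝ) ≤ l),
      mul_nonneg (mul_nonneg ha.le ha.le) (by linarith : (0 : ℝ) ≤ l),
      mul_nonneg ha.le (by linarith : (0 : ℝ) ≤ k)]
  calc _ ≤ |x| * ((a * l + k - 1) / (l * (1 + a) + k + 2 * a)) +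
        |y| * ((l - 2 + a) / (l * (1 + a) + k + 2 * a)) := by
        refine (abs_add_le _ _).trans_eq ?_
        rw [abs_mul, abs_mul, abs_of_nonneg hp0, abs_of_nonneg hq0]
    _ ≤ |x| * 1 + |y| * ((2 + a) / (2 + 2 * a)) := by gcongr
    _ = |x| + (2 + a) / (2 + 2 * a) * |y| := by ring

theorem clk_summable_general (a : ℝ) (ha : 0 < a) (c : ℕ → ℕ → ℝ)
    (h00 : ∀ l : ℕ, c l 0 = 0)
    (hl : ∀ l k : ℕ, 2 ≤ l → 1 ≤ k →
      c l k = c l (k - 1) *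
          ((a * (l : ℝ) + (k : ℝ) - 1) / ((l : ℝ) * (1 + a) + (k : ℝ) + 2 * a)) +
        c (l - 1) k *
          (((l : ℝ) - 2 + a) / ((l : ℝ) * (1 + a) + (k : ℝ) + 2 * a))) :
    ∀ N : ℕ, ∀ k : ℕ, 1 ≤ k →
      Summable (fun l : ℕ => (l : ℝ) ^ N * c l k) := by
  intro N k _
  have hρ0 : 0 < (2 + a) / (2 + 2 * a) := by positivity
  have hρ1 : (2 + a) / (2 + 2 * a) < 1 := by rw [div_lt_one (by positivity)]; linarith
  have hrec : ∀ l k : ℕ, |c (l + 2) (k + 1)| ≤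
      |c (l + 2) k| + (2 + a) / (2 + 2 * a) * |c (l + 1) (k + 1)| := fun l k => by
    rw [hl (l + 2) (k + 1) (by omega) (by omega)]
    exact abs_mul_add_mul_weights_le ha (by push_cast; linarith) (by push_cast; linarith) _ _
  obtain ⟨M, hM⟩ := exists_abs_le_add_one_pow_mul_geometric hρ0 h00 hrec k
  exact summable_pow_mul_of_abs_le_add_one_pow_mul_geometric hρ0 hρ1 hM N

theorem clk_summable (a : ℝ) (ha : 0 < a) (c : ℕ → ℕ → ℝ)
    (h00 : ∀ l : ℕ, c l 0 = 0) (h0k : ∀ k : ℕ, c 0 k = 0)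
    (h1 : ∀ k : ℕ, 1 ≤ k →
      c 1 k = c 1 (k - 1) * ((a + (k : ℝ) - 1) / ((k : ℝ) + 3 * a + 1)) +
        (betaF ((k : ℝ) - 1 + a) (a + 2) / betaF a (a + 1)) *
          ((a + (k : ℝ) - 1) / ((k : ℝ) + 3 * a + 1)))
    (hl : ∀ l k : ℕ, 2 ≤ l → 1 ≤ k →
      c l k = c l (k - 1) *
          ((a * (l : ℝ) + (k : ℝ) - 1) / ((l : ℝ) * (1 + a) + (k : ℝ) + 2 * a)) +
        c (l - 1) k *
          (((l : ℝ) - 2 + a) / ((l : ℝ) * (1 + a) + (k : ℝ) + 2 * a))) :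
    ∀ N : ℕ, ∀ k : ℕ, 1 ≤ k →
      Summable (fun l : ℕ => (l : ℝ) ^ N * c l k) :=
  clk_summable_general a ha c h00 hl
end

section
/- Let a > 0 and define p(2,0) = P for a constant P > 0, p(l,0) = p(l-1,0)(l-2+a)/(l(1+a)-2-a) for l ≥ 3, and p(l,k) = p(l,k-1)(al+k-2a-1)/(l(1+a)+k-1-a) + p(l-1,k)(l-2+a)/(l(1+a)+k-1-a) for l ≥ 3, k ≥ 1 (with p(l,k)=0 otherwise). Then p(l,k) = O(1/l²) uniformly in k, i.e., there exists C such that p(l,k) ≤ C/l² for all l ≥ 2, k ≥ 0. -/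
open Real

private lemma step0_aux (x Q Q' n D : ℝ) (hx : x ≤ Q') (hQ' : 0 ≤ Q')
    (hn : 0 ≤ n) (hD : 0 < D) (hkey : n * Q' ≤ D * Q) :
    x * (n / D) ≤ Q := by
  have h1 : x * n ≤ Q' * n := mul_le_mul_of_nonneg_right hx hn
  rw [show x * (n / D) = x * n / D by ring, div_le_iff₀ hD]
  nlinarith

private lemma step_aux (x y Q Q' n1 n2 D : ℝ) (hx : x ≤ Q) (hy : y ≤ Q')
    (hQ : 0 ≤ Q) (hn1 : 0 ≤ n1) (hn2 : 0 ≤ n2) (hD : 0 < D)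
    (hkey : n1 * Q + n2 * Q' ≤ D * Q) :
    x * (n1 / D) + y * (n2 / D) ≤ Q := by
  have h1 : x * n1 ≤ Q * n1 := mul_le_mul_of_nonneg_right hx hn1
  have h2 : y * n2 ≤ Q' * n2 := mul_le_mul_of_nonneg_right hy hn2
  rw [show x * (n1 / D) + y * (n2 / D) = (x * n1 + y * n2) / D by ring, div_le_iff₀ hD]
  nlinarith

private lemma div_key_aux (K n D X Y : ℝ) (hK : 0 ≤ K) (hX : 0 < X) (hY : 0 < Y)
    (h : n * Y ≤ D * X) : n * (K / X) ≤ D * (K / Y) := by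
  rw [show n * (K / X) = n * K / X by ring, show D * (K / Y) = D * K / Y by ring,
    div_le_div_iff₀ hX hY]
  nlinarith [mul_le_mul_of_nonneg_right h hK]

set_option maxHeartbeats 1000000 in
theorem plk_quadratic_decay (a P : ℝ) (ha : 0 < a) (hP : 0 < P) (p : ℕ → ℕ → ℝ)
    (h20 : p 2 0 = P)
    (h2k : ∀ k : ℕ, 1 ≤ k → p 2 k = 0)
    (hsmall : ∀ l k : ℕ, l ≤ 1 → p l k = 0)
    (hl0 : ∀ l : ℕ, 3 ≤ l →
      p l 0 = p (l - 1) 0 * (((l : ℝ) - 2 + a) / ((l : ℝ) * (1 + a) - 2 - a)))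
    (hlk : ∀ l k : ℕ, 3 ≤ l → 1 ≤ k →
      p l k = p l (k - 1) *
          ((a * (l : ℝ) + (k : ℝ) - 2 * a - 1) / ((l : ℝ) * (1 + a) + (k : ℝ) - 1 - a)) +
        p (l - 1) k *
          (((l : ℝ) - 2 + a) / ((l : ℝ) * (1 + a) + (k : ℝ) - 1 - a))) :
    ∃ C : ℝ, ∀ l k : ℕ, 2 ≤ l → p l k ≤ C / (l : ℝ) ^ 2 := by
  -- Step 1: uniform bound p l k ≤ P for all l ≥ 2
  have hunif : ∀ l : ℕ, 2 ≤ l → ∀ k, p l k ≤ P := by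
    intro l hl
    induction l, hl using Nat.le_induction with
    | base =>
      intro k
      match k with
      | 0 => rw [h20]
      | (k+1) => rw [h2k (k+1) (by omega)]; exact hP.le
    | succ l hl ih =>
      intro k
      have hl2 : (2:ℝ) ≤ (l:ℝ) := by exact_mod_cast hl
      induction k with
      | zero =>
        rw [hl0 (l+1) (by omega)]
        simp only [Nat.add_sub_cancel]
        push_cast
        refine step0_aux _ P P _ _ (ih 0) hP.le (by nlinarith) (by nlinarith) ?_
        nlinarith [mul_nonneg (mul_nonneg hP.le ha.le) (by linarith : (0:ℝ) ≤ (l:ℝ) - 1)]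
      | succ k ihk =>
        rw [hlk (l+1) (k+1) (by omega) (by omega)]
        simp only [Nat.add_sub_cancel]
        push_cast
        have hk0 : (0:ℝ) ≤ (k:ℝ) := Nat.cast_nonneg k
        exact step_aux _ _ P P _ _ _ ihk (ih (k+1)) hP.le
          (by nlinarith) (by nlinarith) (by nlinarith) (by nlinarith)
  -- Step 2: choose N with N ≥ 2 and N ≥ 1 + 2/a
  obtain ⟨N, hN2, hNa⟩ : ∃ N : ℕ, 2 ≤ N ∧ 1 + 2/a ≤ (N:ℝ) := by
    refine ⟨max 2 ⌈1 + 2/a⌉₊, le_max_left _ _, ?_⟩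
    calc (1 + 2/a) ≤ (⌈1 + 2/a⌉₊ : ℝ) := Nat.le_ceil _
      _ ≤ ((max 2 ⌈1 + 2/a⌉₊ : ℕ) : ℝ) := by exact_mod_cast le_max_right _ _
  have hN2r : (2:ℝ) ≤ (N:ℝ) := by exact_mod_cast hN2
  obtain ⟨K, hKdef⟩ : ∃ K : ℝ, K = P * (((N:ℝ) + a) * ((N:ℝ) + a - 1)) := ⟨_, rfl⟩
  have hK : 0 < K := by
    rw [hKdef]
    apply mul_pos hP
    apply mul_pos <;> nlinarith
  -- Step 3: for l ≥ N, p l k ≤ K / ((l+a)(l+a-1))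
  have hQ : ∀ l : ℕ, N ≤ l → ∀ k, p l k ≤ K / (((l:ℝ) + a) * ((l:ℝ) + a - 1)) := by
    intro l hl
    induction l, hl using Nat.le_induction with
    | base =>
      intro k
      have hd1 : ((N:ℝ) + a) ≠ 0 := by nlinarith
      have hd2 : ((N:ℝ) + a - 1) ≠ 0 := by nlinarith
      have : K / (((N:ℝ) + a) * ((N:ℝ) + a - 1)) = P := by
        rw [hKdef]; field_simp
      rw [this]
      exact hunif N hN2 k
    | succ l hl ih =>
      have hlr : (N:ℝ) ≤ (l:ℝ) := by exact_mod_cast hl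
      have hl2 : (2:ℝ) ≤ (l:ℝ) := le_trans hN2r hlr
      have hal : 2 ≤ ((l:ℝ) - 1) * a := (div_le_iff₀ ha).mp (by linarith)
      have hpos1 : (0:ℝ) < (l:ℝ) + a := by nlinarith
      have hpos2 : (0:ℝ) < (l:ℝ) + a - 1 := by nlinarith
      have hpos3 : (0:ℝ) < ((l:ℝ) + 1) + a := by nlinarith
      have hpos4 : (0:ℝ) < ((l:ℝ) + 1) + a - 1 := by nlinarith
      have hQl : (0:ℝ) ≤ K / (((l:ℝ) + a) * ((l:ℝ) + a - 1)) := by positivity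
      intro k
      induction k with
      | zero =>
        rw [hl0 (l+1) (by omega)]
        simp only [Nat.add_sub_cancel]
        push_cast
        apply step0_aux _ _ (K / (((l:ℝ) + a) * ((l:ℝ) + a - 1))) _ _ (ih 0) hQl
          (by nlinarith) (by nlinarith)
        apply div_key_aux _ _ _ _ _ hK.le (by positivity) (by positivity)
        nlinarith [mul_nonneg (mul_nonneg hpos1.le hpos2.le)
          (by linarith : (0:ℝ) ≤ ((l:ℝ) - 1) * a - 2)]
      | succ k ihk =>
        rw [hlk (l+1) (k+1) (by omega) (by omega)]
        simp only [Nat.add_sub_cancel]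
        push_cast
        have hk0 : (0:ℝ) ≤ (k:ℝ) := Nat.cast_nonneg k
        have ihk' : p (l+1) k ≤ K / ((((l:ℝ)+1) + a) * (((l:ℝ)+1) + a - 1)) := by
          have h := ihk; push_cast at h; exact h
        refine step_aux _ _ _ (K / (((l:ℝ) + a) * ((l:ℝ) + a - 1))) _ _ _ ihk' (ih (k+1))
          ?_ ?_ ?_ ?_ ?_
        · positivity
        · nlinarith
        · nlinarith
        · nlinarith
        · apply le_of_eq
          field_simp
          ring
  -- Step 4: assemble
  refine ⟨max (2*K) (P * (N:ℝ)^2), ?_⟩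
  intro l k hl
  have hl2 : (2:ℝ) ≤ (l:ℝ) := by exact_mod_cast hl
  have hlsq : (0:ℝ) < (l:ℝ)^2 := by positivity
  rcases lt_or_ge l N with h | h
  · have h1 : p l k ≤ P := hunif l hl k
    have hlN : (l:ℝ) ≤ (N:ℝ) := by exact_mod_cast h.le
    have h2 : P ≤ P * (N:ℝ)^2 / (l:ℝ)^2 := by
      rw [le_div_iff₀ hlsq]
      nlinarith [mul_le_mul hlN hlN (by positivity : (0:ℝ) ≤ (l:ℝ)) (by positivity : (0:ℝ) ≤ (N:ℝ)), hP.le]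
    calc p l k ≤ P * (N:ℝ)^2 / (l:ℝ)^2 := le_trans h1 h2
      _ ≤ max (2*K) (P * (N:ℝ)^2) / (l:ℝ)^2 := by gcongr; exact le_max_right _ _
  · have h1 := hQ l h k
    have hlr : (N:ℝ) ≤ (l:ℝ) := by exact_mod_cast h
    have hpos1 : (0:ℝ) < (l:ℝ) + a := by nlinarith
    have hpos2 : (0:ℝ) < (l:ℝ) + a - 1 := by nlinarith
    have h2 : K / (((l:ℝ) + a) * ((l:ℝ) + a - 1)) ≤ 2*K / (l:ℝ)^2 := by
      rw [div_le_div_iff₀ (by positivity) hlsq]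
      nlinarith [mul_nonneg hK.le (mul_nonneg (by linarith : (0:ℝ) ≤ (l:ℝ) - 2) (by linarith : (0:ℝ) ≤ (l:ℝ))),
        mul_pos hK (mul_pos ha (by linarith : (0:ℝ) < 2*(l:ℝ) + a - 1))]
    calc p l k ≤ 2*K / (l:ℝ)^2 := le_trans h1 h2
      _ ≤ max (2*K) (P * (N:ℝ)^2) / (l:ℝ)^2 := by gcongr; exact le_max_left _ _
end

section
/- With p(l,k) as defined by the Buckley–Osthus loop recurrence (parameter a > 0, initial value p(2,0) = P), there exists a constant C such that p(l,k) ≤ C·k/l³ for all l ≥ 2 and k ≥ 1. -/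
/-!
Since all coefficients of the recurrence are nonnegative for `l ≥ 3`, any `f` that dominates `p`
on the row `l = 2` and satisfies the recurrence with `≤` dominates `p` everywhere. Row `k = 0`
decays geometrically, with ratio at most `r = (1 + a) / (1 + 2a)`. For `k ≥ 1` take
`f l k = C k / s l` with `s l = (l + c)(l + c + 1)(l + c + 2) ≥ l³` and `c = 2a + 1/a`: because
`s l / s (l - 1) = (l + c + 2) / (l + c - 1)` exactly, the supersolution inequality becomes a
polynomial inequality in `l` and `k`. At `k = 1` it holds with a factor `1/2` to spare, which
absorbs the contribution of row `0`: that row is `O(rˡ)`, so `rˡ s l` is bounded.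
-/

def cubicWeight (c x : ℝ) : ℝ := (x + c) * (x + c + 1) * (x + c + 2)

lemma cubicWeight_pos {c x : ℝ} (h : 0 < x + c) : 0 < cubicWeight c x :=
  mul_pos (mul_pos h (by linarith)) (by linarith)

lemma pow_three_le_cubicWeight {c x : ℝ} (hc : 0 ≤ c) (hx : 0 ≤ x) :
    x ^ 3 ≤ cubicWeight c x := by
  unfold cubicWeight
  calc x ^ 3 = x * x * x := by ring
    _ ≤ _ := by gcongr <;> linarith

lemma cubicWeight_le {c x : ℝ} (hc : 0 ≤ c) (hx : 1 ≤ x) :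
    cubicWeight c x ≤ (c + 3) ^ 3 * x ^ 3 := by
  unfold cubicWeight
  calc _ ≤ ((c + 3) * x) * ((c + 3) * x) * ((c + 3) * x) := by gcongr <;> nlinarith
    _ = _ := by ring

lemma exists_pow_mul_cubicWeight_le {r c : ℝ} (hr0 : 0 ≤ r) (hr1 : r < 1) (hc : 0 ≤ c) :
    ∃ M, ∀ l : ℕ, 1 ≤ l → r ^ l * cubicWeight c l ≤ M := by
  obtain ⟨M, hM⟩ := (tendsto_pow_const_mul_const_pow_of_lt_one 3 hr0 hr1).bddAbove_range
  refine ⟨(c + 3) ^ 3 * M, fun l hl => ?_⟩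
  calc r ^ l * cubicWeight c l ≤ r ^ l * ((c + 3) ^ 3 * (l : ℝ) ^ 3) := by
        gcongr; exact cubicWeight_le hc (by exact_mod_cast hl)
    _ = (c + 3) ^ 3 * ((l : ℝ) ^ 3 * r ^ l) := by ring
    _ ≤ (c + 3) ^ 3 * M := by gcongr; exact hM (Set.mem_range_self l)

lemma weighted_step_le {c l A B D j k C : ℝ} (hx : 1 < l + c) (hD : 0 < D) (hC : 0 ≤ C)
    (h : j * A * (l + c - 1) + k * B * (l + c + 2) ≤ k * D * (l + c - 1)) :
    C * j / cubicWeight c l * (A / D) + C * k / cubicWeight c (l - 1) * (B / D) ≤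
      C * k / cubicWeight c l := by
  have hs : 0 < cubicWeight c l := cubicWeight_pos (by linarith)
  have hx0 : 0 < l + c - 1 := by linarith
  have hs' : cubicWeight c (l - 1) = cubicWeight c l * (l + c - 1) / (l + c + 2) := by
    unfold cubicWeight; field_simp; ring
  calc _ = C / (D * cubicWeight c l * (l + c - 1)) *
        (j * A * (l + c - 1) + k * B * (l + c + 2)) := by
        rw [hs']; field_simp
    _ ≤ C / (D * cubicWeight c l * (l + c - 1)) * (k * D * (l + c - 1)) := by gcongr
    _ = _ := by field_simp

lemma loop_weight_ineq_one {a c l : ℝ} (ha : 0 < a) (hc : 2 * a + a⁻¹ ≤ c) (hl : 2 ≤ l) :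
    (a * l - 2 * a) * (l + c - 1) / 2 + (l - 2 + a) * (l + c + 2) ≤
      (l * (1 + a) - a) * (l + c - 1) := by
  have hai : a * a⁻¹ = 1 := mul_inv_cancel₀ ha.ne'
  have hainv : 0 < a⁻¹ := inv_pos.2 ha
  rcases le_or_gt 2 (a * (l - 2)) with h | h
  · nlinarith [mul_le_mul_of_nonneg_right h (show 0 ≤ l + c - 1 by linarith)]
  · nlinarith [mul_lt_mul_of_pos_left h hainv, mul_nonneg ha.le (show 0 ≤ l - 2 by linarith),
      mul_nonneg (mul_nonneg ha.le (show 0 ≤ l - 2 by linarith)) (show 0 ≤ l + c - 1 by linarith)]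

lemma loop_weight_ineq {a c l k : ℝ} (ha : 0 < a) (hc : 2 * a + a⁻¹ ≤ c) (hl : 2 ≤ l)
    (hk : 1 ≤ k) :
    (k - 1) * (a * l + k - 2 * a - 1) * (l + c - 1) + k * (l - 2 + a) * (l + c + 2) ≤
      k * (l * (1 + a) + k - 1 - a) * (l + c - 1) := by
  have hca : a ≤ c := by nlinarith [inv_pos.2 ha]
  nlinarith [loop_weight_ineq_one ha hc hl,
    mul_nonneg (mul_nonneg ha.le (show 0 ≤ l - 2 by linarith)) (show 0 ≤ l + c - 1 by linarith),
    mul_nonneg (show 0 ≤ k - 1 by linarith) (show 0 ≤ c + 1 - a by linarith)]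

lemma loop_ratio_le {a l : ℝ} (ha : 0 < a) (hl : 3 ≤ l) :
    (l - 2 + a) / (l * (1 + a) - 2 - a) ≤ (1 + a) / (1 + 2 * a) := by
  rw [div_le_div_iff₀ (by nlinarith) (by linarith)]
  nlinarith [mul_nonneg (sq_nonneg a) (sub_nonneg.2 hl)]

lemma loop_denom_pos {a l k : ℝ} (ha : 0 < a) (hl : 3 ≤ l) (hk : 0 ≤ k) :
    0 < l * (1 + a) + k - 1 - a := by
  nlinarith

theorem le_of_supersolution {p f : ℕ → ℕ → ℝ} {ρ : ℕ → ℝ} {α β : ℕ → ℕ → ℝ}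
    (hρ : ∀ l, 3 ≤ l → 0 ≤ ρ l) (hα : ∀ l k, 3 ≤ l → 1 ≤ k → 0 ≤ α l k)
    (hβ : ∀ l k, 3 ≤ l → 1 ≤ k → 0 ≤ β l k)
    (hp0 : ∀ l, 3 ≤ l → p l 0 = p (l - 1) 0 * ρ l)
    (hpk : ∀ l k, 3 ≤ l → 1 ≤ k → p l k = p l (k - 1) * α l k + p (l - 1) k * β l k)
    (hf0 : ∀ l, 3 ≤ l → f (l - 1) 0 * ρ l ≤ f l 0)
    (hfk : ∀ l k, 3 ≤ l → 1 ≤ k → f l (k - 1) * α l k + f (l - 1) k * β l k ≤ f l k)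
    (h2 : ∀ k, p 2 k ≤ f 2 k) {l : ℕ} (hl : 2 ≤ l) (k : ℕ) : p l k ≤ f l k := by
  induction l, hl using Nat.le_induction generalizing k with
  | base => exact h2 k
  | succ l hl ihl =>
    have hl3 : 3 ≤ l + 1 := by omega
    induction k with
    | zero =>
      calc p (l + 1) 0 = p l 0 * ρ (l + 1) := hp0 _ hl3
        _ ≤ f l 0 * ρ (l + 1) := mul_le_mul_of_nonneg_right (ihl 0) (hρ _ hl3)
        _ ≤ f (l + 1) 0 := hf0 _ hl3
    | succ k ihk =>
      have hk : 1 ≤ k + 1 := by omega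
      calc p (l + 1) (k + 1)
          = p (l + 1) k * α (l + 1) (k + 1) + p l (k + 1) * β (l + 1) (k + 1) :=
            hpk _ _ hl3 hk
        _ ≤ f (l + 1) k * α (l + 1) (k + 1) + f l (k + 1) * β (l + 1) (k + 1) :=
            add_le_add (mul_le_mul_of_nonneg_right ihk (hα _ _ hl3 hk))
              (mul_le_mul_of_nonneg_right (ihl _) (hβ _ _ hl3 hk))
        _ ≤ f (l + 1) (k + 1) := hfk _ _ hl3 hk

noncomputable def loopMajorant (E r C c : ℝ) (l k : ℕ) : ℝ :=
  if k = 0 then E * r ^ l else C * k / cubicWeight c l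

lemma loopMajorant_zero_step {a E C c : ℝ} {l : ℕ} (ha : 0 < a) (hE : 0 ≤ E) (hl : 3 ≤ l) :
    loopMajorant E ((1 + a) / (1 + 2 * a)) C c (l - 1) 0 *
        (((l : ℝ) - 2 + a) / ((l : ℝ) * (1 + a) - 2 - a)) ≤
      loopMajorant E ((1 + a) / (1 + 2 * a)) C c l 0 := by
  obtain ⟨n, rfl⟩ : ∃ n, l = n + 1 := ⟨l - 1, by omega⟩
  have hl' : (3 : ℝ) ≤ (n + 1 : ℕ) := by exact_mod_cast hl
  simp only [loopMajorant, if_pos, Nat.add_sub_cancel, pow_succ, ← mul_assoc]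
  exact mul_le_mul_of_nonneg_left (loop_ratio_le ha hl') (mul_nonneg hE (by positivity))

lemma loopMajorant_step {a c E r C : ℝ} {l k : ℕ} (ha : 0 < a) (hc : 2 * a + a⁻¹ ≤ c)
    (hC : 0 ≤ C) (hE : E * r ^ l * cubicWeight c l ≤ C / 2) (hl : 3 ≤ l) (hk : 1 ≤ k) :
    loopMajorant E r C c l (k - 1) *
        ((a * (l : ℝ) + (k : ℝ) - 2 * a - 1) / ((l : ℝ) * (1 + a) + (k : ℝ) - 1 - a)) +
      loopMajorant E r C c (l - 1) k *
        (((l : ℝ) - 2 + a) / ((l : ℝ) * (1 + a) + (k : ℝ) - 1 - a)) ≤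
      loopMajorant E r C c l k := by
  have hl' : (3 : ℝ) ≤ l := by exact_mod_cast hl
  have hk' : (1 : ℝ) ≤ k := by exact_mod_cast hk
  have hD := loop_denom_pos ha hl' (by linarith : (0 : ℝ) ≤ k)
  have hx : 1 < (l : ℝ) + c := by linarith [le_trans (by positivity) hc]
  simp only [loopMajorant, if_neg (show k ≠ 0 by omega), Nat.cast_sub (show 1 ≤ l by omega),
    Nat.cast_one]
  obtain rfl | hk2 := eq_or_lt_of_le hk
  · -- the spare `1/2` of `loop_weight_ineq_one` absorbs row `0`
    have hEl : E * r ^ l ≤ C * (1 / 2) / cubicWeight c l := by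
      rw [le_div_iff₀ (cubicWeight_pos (by linarith))]; linarith
    simp only [↓reduceIte, Nat.cast_one] at hD ⊢
    calc _ ≤ C * (1 / 2) / cubicWeight c l * ((a * l + 1 - 2 * a - 1) / (l * (1 + a) + 1 - 1 - a)) +
          C * 1 / cubicWeight c (l - 1) * ((l - 2 + a) / (l * (1 + a) + 1 - 1 - a)) := by
          gcongr
          exact div_nonneg (by nlinarith) hD.le
      _ ≤ C * 1 / cubicWeight c l := weighted_step_le hx hD hC (by
          linarith [loop_weight_ineq_one ha hc (by linarith : (2 : ℝ) ≤ l)])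
  · rw [if_neg (by omega), Nat.cast_sub hk, Nat.cast_one]
    exact weighted_step_le hx hD hC (loop_weight_ineq ha hc (by linarith) hk')

theorem loop_le_loopMajorant {a c E C : ℝ} {p : ℕ → ℕ → ℝ} (ha : 0 < a) (hc : 2 * a + a⁻¹ ≤ c)
    (hE : 0 ≤ E) (hC : 0 ≤ C)
    (hEC : ∀ l : ℕ, 3 ≤ l → E * ((1 + a) / (1 + 2 * a)) ^ l * cubicWeight c l ≤ C / 2)
    (h20 : p 2 0 ≤ E * ((1 + a) / (1 + 2 * a)) ^ 2) (h2k : ∀ k : ℕ, 1 ≤ k → p 2 k = 0)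
    (hl0 : ∀ l : ℕ, 3 ≤ l →
      p l 0 = p (l - 1) 0 * (((l : ℝ) - 2 + a) / ((l : ℝ) * (1 + a) - 2 - a)))
    (hlk : ∀ l k : ℕ, 3 ≤ l → 1 ≤ k →
      p l k = p l (k - 1) *
          ((a * (l : ℝ) + (k : ℝ) - 2 * a - 1) / ((l : ℝ) * (1 + a) + (k : ℝ) - 1 - a)) +
        p (l - 1) k *
          (((l : ℝ) - 2 + a) / ((l : ℝ) * (1 + a) + (k : ℝ) - 1 - a)))
    {l : ℕ} (hl : 2 ≤ l) (k : ℕ) :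
    p l k ≤ loopMajorant E ((1 + a) / (1 + 2 * a)) C c l k := by
  have hcast : ∀ n : ℕ, 3 ≤ n → (3 : ℝ) ≤ n := fun n hn => by exact_mod_cast hn
  refine le_of_supersolution
    (fun l hl => div_nonneg (by linarith [hcast l hl]) (by nlinarith [hcast l hl]))
    (fun l k hl hk => div_nonneg (by nlinarith [hcast l hl, (Nat.one_le_cast (α := ℝ)).2 hk])
      (loop_denom_pos ha (hcast l hl) k.cast_nonneg).le)
    (fun l k hl hk => div_nonneg (by linarith [hcast l hl])
      (loop_denom_pos ha (hcast l hl) k.cast_nonneg).le)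
    hl0 hlk (fun l hl => loopMajorant_zero_step ha hE hl)
    (fun l k hl hk => loopMajorant_step ha hc hC (hEC l hl) hl hk) (fun k => ?_) hl k
  rcases Nat.eq_zero_or_pos k with rfl | hk
  · simpa [loopMajorant] using h20
  · rw [h2k k hk, loopMajorant, if_neg hk.ne']
    have hc0 : 0 ≤ c := le_trans (by positivity) hc
    exact div_nonneg (by positivity) (cubicWeight_pos (by norm_num; linarith)).le

theorem plk_cubic_decay_general (a P : ℝ) (ha : 0 < a) (hP : 0 < P) (p : ℕ → ℕ → ℝ)
    (h20 : p 2 0 = P)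
    (h2k : ∀ k : ℕ, 1 ≤ k → p 2 k = 0)
    (hl0 : ∀ l : ℕ, 3 ≤ l →
      p l 0 = p (l - 1) 0 * (((l : ℝ) - 2 + a) / ((l : ℝ) * (1 + a) - 2 - a)))
    (hlk : ∀ l k : ℕ, 3 ≤ l → 1 ≤ k →
      p l k = p l (k - 1) *
          ((a * (l : ℝ) + (k : ℝ) - 2 * a - 1) / ((l : ℝ) * (1 + a) + (k : ℝ) - 1 - a)) +
        p (l - 1) k *
          (((l : ℝ) - 2 + a) / ((l : ℝ) * (1 + a) + (k : ℝ) - 1 - a))) :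
    ∃ C : ℝ, ∀ l k : ℕ, 2 ≤ l → 1 ≤ k → p l k ≤ C * (k : ℝ) / (l : ℝ) ^ 3 := by
  set r := (1 + a) / (1 + 2 * a)
  set c := 2 * a + a⁻¹
  have hr0 : 0 < r := by positivity
  have hr1 : r < 1 := by rw [div_lt_one (by positivity)]; linarith
  obtain ⟨M, hM⟩ := exists_pow_mul_cubicWeight_le hr0.le hr1 (by positivity : 0 ≤ c)
  have hM0 : 0 ≤ M := (mul_pos (pow_pos hr0 1) (cubicWeight_pos (by positivity))).le.trans
    (hM 1 le_rfl)
  set E := P / r ^ 2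
  have hE : 0 ≤ E := by positivity
  refine ⟨2 * (E * M), fun l k hl hk => ?_⟩
  have hEC (l : ℕ) (hl : 3 ≤ l) : E * r ^ l * cubicWeight c l ≤ 2 * (E * M) / 2 := by
    rw [mul_assoc, mul_div_cancel_left₀ _ two_ne_zero]
    exact mul_le_mul_of_nonneg_left (hM l (by omega)) hE
  have h20' : p 2 0 ≤ E * r ^ 2 := by rw [h20, div_mul_cancel₀ P (pow_ne_zero 2 hr0.ne')]
  calc p l k ≤ loopMajorant E r (2 * (E * M)) c l k :=
        loop_le_loopMajorant ha le_rfl hE (by positivity) hEC h20' h2k hl0 hlk hl k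
    _ = 2 * (E * M) * k / cubicWeight c l := if_neg (by omega)
    _ ≤ 2 * (E * M) * k / l ^ 3 := by
        gcongr
        exact pow_three_le_cubicWeight (by positivity) (by positivity)

theorem plk_cubic_decay (a P : ℝ) (ha : 0 < a) (hP : 0 < P) (p : ℕ → ℕ → ℝ)
    (h20 : p 2 0 = P)
    (h2k : ∀ k : ℕ, 1 ≤ k → p 2 k = 0)
    (hsmall : ∀ l k : ℕ, l ≤ 1 → p l k = 0)
    (hl0 : ∀ l : ℕ, 3 ≤ l →
      p l 0 = p (l - 1) 0 * (((l : ℝ) - 2 + a) / ((l : ℝ) * (1 + a) - 2 - a)))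
    (hlk : ∀ l k : ℕ, 3 ≤ l → 1 ≤ k →
      p l k = p l (k - 1) *
          ((a * (l : ℝ) + (k : ℝ) - 2 * a - 1) / ((l : ℝ) * (1 + a) + (k : ℝ) - 1 - a)) +
        p (l - 1) k *
          (((l : ℝ) - 2 + a) / ((l : ℝ) * (1 + a) + (k : ℝ) - 1 - a))) :
    ∃ C : ℝ, ∀ l k : ℕ, 2 ≤ l → 1 ≤ k → p l k ≤ C * (k : ℝ) / (l : ℝ) ^ 3 :=
  plk_cubic_decay_general a P ha hP p h20 h2k hl0 hlk
end

section
/- Let a > 0 and define the sequence F(1) = n(1+a) and for k ≥ 2, F satisfies the recurrence F_{i+1}(k) = F_i(k)(1 − (k−2+a)/((a+1)i+a)) + F_i(k−1)(k−1+a)/((a+1)i+a) with F_i(k) = 0 for i < k−1. Then for some constant C, F_n(k) = ((a+1)Γ(2a+1)Γ(k+a))/(Γ(a+1)Γ(k+2a)) · n · (1 + θ) where |θ| ≤ C(k−1)^{1+a}/n. -/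
/-!
Write `c = limitSlope a`, `M = errorBound a` and `e i k = F i k - c k * i`. Since
`c (k + 1) * (k + 2a) = c k * (k + a)`, the recurrence for `F`, multiplied by `D = (a + 1) i + a`,
becomes
`e (i+1) (k+1) * D = e i (k+1) * (D - (k - 1 + a)) + e i k * (k + a) - c (k+1) * a`,
whose weights are nonnegative for `i ≥ k - 1`. As `M` solves
`M (k+1) * (k - 1 + a) = M k * (k + 2a) + a` with `M 1 = 0`, the triangle inequality propagates
`|e i k| ≤ c k * M k` along the recurrence; for `i < k - 1` the error is `c k * i ≤ c k * M k`
because `M (k + 1) ≥ k`. By Bernoulli's inequality `(k - 1) ^ (1 + a)` is a supersolution of the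
recurrence for `M`, so `M k ≤ (k - 1) ^ (1 + a)`.
-/

open Real

lemma rpow_add_mul_rpow_le_add_one_rpow {t a : ℝ} (ht : 0 < t) (ha : 0 ≤ a) :
    t ^ (1 + a) + (1 + a) * t ^ a ≤ (t + 1) ^ (1 + a) := by
  have bernoulli : 1 + (1 + a) * t⁻¹ ≤ (1 + t⁻¹) ^ (1 + a) :=
    one_add_mul_self_le_rpow_one_add (by linarith [inv_pos.2 ht]) (by linarith)
  calc t ^ (1 + a) + (1 + a) * t ^ a = t ^ (1 + a) * (1 + (1 + a) * t⁻¹) := by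
        rw [rpow_add ht, rpow_one]; field_simp
    _ ≤ t ^ (1 + a) * (1 + t⁻¹) ^ (1 + a) := by gcongr
    _ = (t + 1) ^ (1 + a) := by
        rw [← mul_rpow ht.le (by positivity)]; congr 1; field_simp

noncomputable def errorBound (a : ℝ) : ℕ → ℝ
  | 0 => 0
  | 1 => 0
  | k + 2 => (errorBound a (k + 1) * (k + 1 + 2 * a) + a) / (k + a)

section errorBound

variable {a : ℝ} (ha : 0 < a)

include ha

lemma errorBound_succ_succ_mul (k : ℕ) :
    errorBound a (k + 2) * (k + a) = errorBound a (k + 1) * (k + 1 + 2 * a) + a := by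
  rw [errorBound, div_mul_cancel₀ _ (by positivity)]

lemma natCast_le_errorBound (k : ℕ) : (k : ℝ) ≤ errorBound a (k + 1) := by
  induction k with
  | zero => simp [errorBound]
  | succ k ih =>
    have := errorBound_succ_succ_mul ha k
    push_cast
    nlinarith [mul_le_mul_of_nonneg_right ih (by positivity : (0 : ℝ) ≤ k + 1 + 2 * a)]

lemma errorBound_le_rpow (k : ℕ) : errorBound a (k + 1) ≤ (k : ℝ) ^ (1 + a) := by
  induction k with
  | zero => simp [errorBound, zero_rpow (by positivity : (1 : ℝ) + a ≠ 0)]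
  | succ k ih =>
    rcases Nat.eq_zero_or_pos k with rfl | hk
    · simp [errorBound, ha.ne']
    have ht : (1 : ℝ) ≤ k := by exact_mod_cast hk
    have hM := errorBound_succ_succ_mul ha k
    have step := rpow_add_mul_rpow_le_add_one_rpow (by linarith : (0 : ℝ) < k) ha.le
    have hpow : (k : ℝ) ^ (1 + a) = k * k ^ a := by rw [rpow_add (by linarith), rpow_one]
    have hge : (1 : ℝ) ≤ (k : ℝ) ^ a := one_le_rpow ht ha.le
    push_cast
    have key :
        errorBound a (k + 1) * (k + 1 + 2 * a) + a ≤ (k + 1 : ℝ) ^ (1 + a) * (k + a) := by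
      nlinarith [mul_le_mul_of_nonneg_right ih (by positivity : (0 : ℝ) ≤ k + 1 + 2 * a),
        mul_le_mul_of_nonneg_right step (by positivity : (0 : ℝ) ≤ k + a),
        mul_le_mul_of_nonneg_left hge (by positivity : (0 : ℝ) ≤ a * (1 + a))]
    exact le_of_mul_le_mul_right (hM.trans_le key) (by positivity)

end errorBound

noncomputable def limitSlope (a : ℝ) (k : ℕ) : ℝ :=
  (a + 1) * Gamma (2 * a + 1) * Gamma ((k : ℝ) + a) / (Gamma (a + 1) * Gamma ((k : ℝ) + 2 * a))

section limitSlope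

variable {a : ℝ} (ha : 0 < a)

include ha

lemma limitSlope_pos (k : ℕ) : 0 < limitSlope a k := by
  unfold limitSlope
  have := Gamma_pos_of_pos (by linarith : 0 < 2 * a + 1)
  have := Gamma_pos_of_pos (by positivity : 0 < (k : ℝ) + a)
  have := Gamma_pos_of_pos (by linarith : 0 < a + 1)
  have := Gamma_pos_of_pos (by positivity : 0 < (k : ℝ) + 2 * a)
  positivity

lemma limitSlope_one : limitSlope a 1 = a + 1 := by
  have := (Gamma_pos_of_pos (by linarith : 0 < a + 1)).ne'
  have := (Gamma_pos_of_pos (by linarith : 0 < 2 * a + 1)).ne'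
  rw [limitSlope, Nat.cast_one, add_comm 1 a, add_comm 1 (2 * a)]
  field_simp

lemma limitSlope_succ_mul (k : ℕ) :
    limitSlope a (k + 1) * (k + 2 * a) = limitSlope a k * (k + a) := by
  have := (Gamma_pos_of_pos (by positivity : 0 < (k : ℝ) + 2 * a)).ne'
  have := (Gamma_pos_of_pos (by linarith : 0 < a + 1)).ne'
  have : (0 : ℝ) < k + 2 * a := by positivity
  simp only [limitSlope, Nat.cast_succ, add_right_comm _ (1 : ℝ),
    Gamma_add_one (by positivity : (k : ℝ) + a ≠ 0),
    Gamma_add_one (by positivity : (k : ℝ) + 2 * a ≠ 0)]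
  field_simp

end limitSlope

lemma abs_le_of_mul_eq_of_abs_le {x y z X Y D δ w r : ℝ} (hD : 0 < D) (hδ : 0 ≤ δ)
    (hw : 0 ≤ w) (hr : 0 ≤ r) (hx : |x| ≤ X) (hy : |y| ≤ Y)
    (hz : z * D = x * δ + y * w - r) (hX : X * D = X * δ + Y * w + r) : |z| ≤ X := by
  refine le_of_mul_le_mul_right ?_ hD
  calc |z| * D = |x * δ + y * w + -r| := by rw [← abs_of_pos hD, ← abs_mul, hz, sub_eq_add_neg]
    _ ≤ |x| * δ + |y| * w + r := by
        refine (abs_add_three _ _ _).trans_eq ?_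
        rw [abs_mul, abs_mul, abs_of_nonneg hδ, abs_of_nonneg hw, abs_neg, abs_of_nonneg hr]
    _ ≤ X * δ + Y * w + r := by gcongr
    _ = X * D := hX.symm

section recurrence

variable {a : ℝ} (ha : 0 < a) {F : ℕ → ℕ → ℝ}
  (hzero : ∀ k : ℕ, 2 ≤ k → ∀ i : ℕ, i < k - 1 → F i k = 0)
  (hrec : ∀ k : ℕ, 2 ≤ k → ∀ i : ℕ,
    F (i + 1) k = F i k * (1 - ((k : ℝ) - 2 + a) / ((a + 1) * (i : ℝ) + a)) +
      F i (k - 1) * (((k : ℝ) - 1 + a) / ((a + 1) * (i : ℝ) + a)))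

include ha

include hzero in
lemma abs_sub_limitSlope_mul_le_of_le {j i : ℕ} (hij : i ≤ j) :
    |F i (j + 2) - limitSlope a (j + 2) * i| ≤ limitSlope a (j + 2) * errorBound a (j + 2) := by
  rw [hzero (j + 2) le_add_self i (by omega), zero_sub, abs_neg,
    abs_of_nonneg (mul_nonneg (limitSlope_pos ha _).le i.cast_nonneg)]
  gcongr
  · exact (limitSlope_pos ha _).le
  · exact (Nat.cast_le.2 (by omega)).trans (natCast_le_errorBound ha (j + 1))

include hrec in
lemma sub_limitSlope_mul_succ_mul (j i : ℕ) :
    (F (i + 1) (j + 2) - limitSlope a (j + 2) * (i + 1 : ℕ)) * ((a + 1) * i + a) =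
      (F i (j + 2) - limitSlope a (j + 2) * i) * ((a + 1) * i + a - (j + a)) +
        (F i (j + 1) - limitSlope a (j + 1) * i) * (j + 1 + a) - limitSlope a (j + 2) * a := by
  have hD : (a + 1) * (i : ℝ) + a ≠ 0 := by positivity
  have hF := hrec (j + 2) le_add_self i
  rw [show j + 2 - 1 = j + 1 from rfl] at hF
  have hc := limitSlope_succ_mul ha (j + 1)
  push_cast at hF hc ⊢
  rw [hF]
  field_simp
  linear_combination -(i : ℝ) * hc

include hzero hrec in
lemma abs_sub_limitSlope_mul_le (h1 : ∀ i : ℕ, F i 1 = (i : ℝ) * (1 + a)) (j i : ℕ) :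
    |F i (j + 1) - limitSlope a (j + 1) * i| ≤ limitSlope a (j + 1) * errorBound a (j + 1) := by
  induction j generalizing i with
  | zero => simp [h1, limitSlope_one ha, errorBound, add_comm a 1, mul_comm]
  | succ j ih =>
    induction i with
    | zero => exact abs_sub_limitSlope_mul_le_of_le ha hzero j.zero_le
    | succ i ihi =>
      rcases Nat.lt_or_ge i j with hij | hji
      · exact abs_sub_limitSlope_mul_le_of_le ha hzero hij
      have hδ : 0 ≤ (a + 1) * (i : ℝ) + a - (j + a) := by
        nlinarith [(Nat.cast_le (α := ℝ)).2 hji, i.cast_nonneg (α := ℝ)]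
      have envelope : limitSlope a (j + 2) * errorBound a (j + 2) * ((a + 1) * i + a) =
          limitSlope a (j + 2) * errorBound a (j + 2) * ((a + 1) * i + a - (j + a)) +
            limitSlope a (j + 1) * errorBound a (j + 1) * (j + 1 + a) +
              limitSlope a (j + 2) * a := by
        have hc := limitSlope_succ_mul ha (j + 1)
        push_cast at hc
        linear_combination limitSlope a (j + 2) * errorBound_succ_succ_mul ha j +
          errorBound a (j + 1) * hc
      exact abs_le_of_mul_eq_of_abs_le (by positivity) hδ (by positivity)
        (mul_nonneg (limitSlope_pos ha _).le ha.le) ihi (ih i)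
        (sub_limitSlope_mul_succ_mul ha hrec j i) envelope

end recurrence

theorem F_asymptotic (a : ℝ) (ha : 0 < a) (F : ℕ → ℕ → ℝ)
    (h1 : ∀ i : ℕ, F i 1 = (i : ℝ) * (1 + a))
    (hzero : ∀ k : ℕ, 2 ≤ k → ∀ i : ℕ, i < k - 1 → F i k = 0)
    (hrec : ∀ k : ℕ, 2 ≤ k → ∀ i : ℕ,
      F (i + 1) k = F i k * (1 - ((k : ℝ) - 2 + a) / ((a + 1) * (i : ℝ) + a)) +
        F i (k - 1) * (((k : ℝ) - 1 + a) / ((a + 1) * (i : ℝ) + a))) :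
    ∃ C > 0, ∀ n k : ℕ, 1 ≤ n → 1 ≤ k →
      |F n k - (a + 1) * Real.Gamma (2 * a + 1) * Real.Gamma ((k : ℝ) + a) /
          (Real.Gamma (a + 1) * Real.Gamma ((k : ℝ) + 2 * a)) * (n : ℝ)| ≤
        (a + 1) * Real.Gamma (2 * a + 1) * Real.Gamma ((k : ℝ) + a) /
            (Real.Gamma (a + 1) * Real.Gamma ((k : ℝ) + 2 * a)) *
          (C * ((k : ℝ) - 1) ^ (1 + a)) := by
  refine ⟨1, one_pos, fun n k _ hk => ?_⟩
  obtain ⟨j, rfl⟩ : ∃ j, k = j + 1 := ⟨k - 1, by omega⟩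
  change |F n (j + 1) - limitSlope a (j + 1) * n| ≤
    limitSlope a (j + 1) * (1 * (((j + 1 : ℕ) : ℝ) - 1) ^ (1 + a))
  rw [one_mul, Nat.cast_succ, add_sub_cancel_right]
  exact (abs_sub_limitSlope_mul_le ha hzero hrec h1 j n).trans
    (mul_le_mul_of_nonneg_left (errorBound_le_rpow ha j) (limitSlope_pos ha _).le)
end

section
/- Let a > 0 and q(l) be defined for l ≥ 2 by a positive initial value q(2) and the recurrence q(l)·(l + a + 1 + al − 2a − 1) = q(l−1)·(l − 2 + a) for l ≥ 3. Then q(l) = O(1/l³), i.e., there exists C such that q(l) ≤ C/l³ for all l ≥ 2. -/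
open Real

theorem q_cubic_decay (a : ℝ) (ha : 0 < a) (q : ℕ → ℝ) (h2 : 0 < q 2)
    (hrec : ∀ l : ℕ, 3 ≤ l →
      q l * ((l : ℝ) + a + 1 + (a * (l : ℝ) - 2 * a - 1)) =
        q (l - 1) * ((l : ℝ) - 2 + a)) :
    ∃ C : ℝ, ∀ l : ℕ, 2 ≤ l → q l ≤ C / (l : ℝ) ^ 3 := by
  set ρ : ℝ := (3 + 2 * a) / (3 + 3 * a) with hρdef
  have h3a : (0:ℝ) < 3 + 3 * a := by linarith
  have hρpos : 0 < ρ := by positivity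
  have hρlt : ρ < 1 := by
    rw [hρdef, div_lt_one h3a]; linarith
  -- one step of the recurrence
  have key : ∀ n : ℕ, 2 ≤ n → 0 < q n → 0 < q (n + 1) ∧ q (n + 1) ≤ q n * ρ := by
    intro n hn hq
    have h := hrec (n + 1) (by omega)
    simp only [Nat.add_sub_cancel] at h
    push_cast at h
    have hn3 : (2:ℝ) ≤ (n : ℝ) := by exact_mod_cast hn
    have hd : 0 < ((n:ℝ) + 1) + a + 1 + (a * ((n:ℝ) + 1) - 2 * a - 1) := by nlinarith
    have hnum : 0 < ((n:ℝ) + 1) - 2 + a := by linarith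
    have hq1 : 0 < q (n + 1) := by nlinarith [mul_pos hq hnum]
    refine ⟨hq1, ?_⟩
    rw [hρdef, ← mul_div_assoc, le_div_iff₀ h3a]
    -- ratio inequality: (n+1-2+a)*(3+3a) ≤ (3+2a)*d
    have hratio : (((n:ℝ) + 1) - 2 + a) * (3 + 3 * a) ≤
        (3 + 2 * a) * (((n:ℝ) + 1) + a + 1 + (a * ((n:ℝ) + 1) - 2 * a - 1)) := by
      nlinarith [mul_le_mul_of_nonneg_left hn3 ha.le,
        mul_le_mul_of_nonneg_left hn3 (mul_nonneg ha.le ha.le), sq_nonneg a]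
    nlinarith [mul_le_mul_of_nonneg_left hratio hq.le, mul_pos hq1 hd]
  -- geometric bound by induction
  have geom : ∀ l : ℕ, 2 ≤ l → 0 < q l ∧ q l ≤ q 2 * ρ ^ (l - 2) := by
    intro l hl
    induction l, hl using Nat.le_induction with
    | base => exact ⟨h2, by simp⟩
    | succ n hn ih =>
      obtain ⟨hpos, hle⟩ := ih
      obtain ⟨hpos', hstep⟩ := key n hn hpos
      refine ⟨hpos', ?_⟩
      have : q n * ρ ≤ q 2 * ρ ^ (n - 2) * ρ :=
        mul_le_mul_of_nonneg_right hle hρpos.le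
      have hpow : q 2 * ρ ^ (n - 2) * ρ = q 2 * ρ ^ (n + 1 - 2) := by
        rw [mul_assoc, ← pow_succ]
        congr 2
        omega
      linarith [hstep, this, hpow ▸ this]
  -- bound n^3 * ρ^n
  have hρnorm : ‖ρ‖ < 1 := by rwa [Real.norm_eq_abs, abs_of_pos hρpos]
  have hsum := summable_pow_mul_geometric_of_norm_lt_one 3 hρnorm (R := ℝ)
  have htend := hsum.tendsto_atTop_zero
  obtain ⟨D, hD⟩ := htend.bddAbove_range
  have hD' : ∀ n : ℕ, (n : ℝ) ^ 3 * ρ ^ n ≤ D := fun n => hD ⟨n, rfl⟩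
  refine ⟨q 2 * D / ρ ^ 2, ?_⟩
  intro l hl
  have hlpos : (0:ℝ) < (l : ℝ) ^ 3 := by
    have : (0:ℝ) < (l:ℝ) := by exact_mod_cast Nat.lt_of_lt_of_le (by norm_num) hl
    positivity
  rw [le_div_iff₀ hlpos]
  obtain ⟨hpos, hle⟩ := geom l hl
  have hsplit : ρ ^ (l - 2) * ρ ^ 2 = ρ ^ l := by
    rw [← pow_add]; congr 1; omega
  have h1 : q l * (l:ℝ) ^ 3 ≤ q 2 * ρ ^ (l - 2) * (l:ℝ) ^ 3 :=
    mul_le_mul_of_nonneg_right hle hlpos.le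
  have h2' : q 2 * ρ ^ (l - 2) * (l:ℝ) ^ 3 * ρ ^ 2 = q 2 * ((l:ℝ) ^ 3 * ρ ^ l) := by
    rw [← hsplit]; ring
  have h3 : q 2 * ((l:ℝ) ^ 3 * ρ ^ l) ≤ q 2 * D :=
    mul_le_mul_of_nonneg_left (hD' l) h2.le
  have hρ2 : (0:ℝ) < ρ ^ 2 := by positivity
  calc q l * (l:ℝ) ^ 3 ≤ q 2 * ρ ^ (l - 2) * (l:ℝ) ^ 3 := h1
    _ = q 2 * ((l:ℝ) ^ 3 * ρ ^ l) / ρ ^ 2 := by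
        rw [eq_div_iff (ne_of_gt hρ2)]; exact h2'
    _ ≤ q 2 * D / ρ ^ 2 := by gcongr
end

section
/- For fixed a > 0 there exists a constant C such that for all n ≥ 1, Σ_{i=1}^n (a/((a+1)i−1)) · Π_{j=i+1}^{n} ((1+a)j−2−a)/((1+a)j−1) ≤ C. (This is the bound E P_n(2,0) = O(1) for the expected number of isolated loop vertices of degree 2 in the Buckley–Osthus graph.) -/
/-!
Write `g j = ((1 + a) j - 2 - a) / ((1 + a) j - 1)`, so that `1 - g j = (1 + a) / ((1 + a) j - 1)`.
Each summand is then `a / (1 + a)` times `(1 - g i) ∏_{j > i} g j`, and these telescope to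
`1 - ∏_{j ≤ n} g j`. Since `g 1 = -1/a` and `0 ≤ g j ≤ 1` for `j ≥ 2`, the full product is at
least `-1/a`, so the sum is at most `a / (1 + a) · (1 + 1/a) = 1`.
-/

open Finset

theorem Finset.sum_one_sub_mul_prod_Ioc {R : Type*} [CommRing R] (g : ℕ → R) {m n : ℕ}
    (hmn : m ≤ n) :
    ∑ i ∈ Ioc m n, (1 - g i) * ∏ j ∈ Ioc i n, g j = 1 - ∏ j ∈ Ioc m n, g j := by
  induction n, hmn using Nat.le_induction with
  | base => simp
  | succ n hmn ih =>
    have extend : ∀ i ∈ Ioc m n, (1 - g i) * ∏ j ∈ Ioc i (n + 1), g j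
        = (1 - g i) * (∏ j ∈ Ioc i n, g j) * g (n + 1) := fun i hi => by
      rw [prod_Ioc_succ_top (mem_Ioc.1 hi).2, mul_assoc]
    rw [sum_Ioc_succ_top hmn, sum_congr rfl extend, ← sum_mul, ih, prod_Ioc_succ_top hmn,
      Ioc_self, prod_empty]
    ring

noncomputable def loopFactor (a : ℝ) (j : ℕ) : ℝ :=
  ((1 + a) * j - 2 - a) / ((1 + a) * j - 1)

section loopFactor

variable {a : ℝ}

theorem loopFactor_one : loopFactor a 1 = -1 / a := by
  unfold loopFactor
  congr 1 <;> push_cast <;> ring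

theorem one_sub_loopFactor (ha : 0 < a) {j : ℕ} (hj : 1 ≤ j) :
    1 - loopFactor a j = (1 + a) / ((1 + a) * j - 1) := by
  have hj' : (1 : ℝ) ≤ j := by exact_mod_cast hj
  have hden : (1 + a) * j - 1 ≠ 0 := by nlinarith
  unfold loopFactor
  field_simp
  ring

theorem loopFactor_nonneg (ha : 0 ≤ a) {j : ℕ} (hj : 2 ≤ j) : 0 ≤ loopFactor a j := by
  have hj' : (2 : ℝ) ≤ j := by exact_mod_cast hj
  unfold loopFactor
  apply div_nonneg <;> nlinarith

theorem loopFactor_le_one (ha : 0 ≤ a) {j : ℕ} (hj : 1 ≤ j) : loopFactor a j ≤ 1 := by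
  have hj' : (1 : ℝ) ≤ j := by exact_mod_cast hj
  unfold loopFactor
  apply div_le_one_of_le₀ <;> nlinarith

theorem neg_inv_le_prod_loopFactor (ha : 0 < a) (n : ℕ) :
    -a⁻¹ ≤ ∏ j ∈ Icc 1 n, loopFactor a j := by
  rcases Nat.eq_zero_or_pos n with rfl | hn
  · simpa using (neg_nonpos.2 (inv_pos.2 ha).le).trans zero_le_one
  have tail_le_one : ∏ j ∈ Ioc 1 n, loopFactor a j ≤ 1 :=
    prod_le_one (fun j hj => loopFactor_nonneg ha.le (mem_Ioc.1 hj).1)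
      fun j hj => loopFactor_le_one ha.le (mem_Ioc.1 hj).1.le
  rw [Icc_eq_cons_Ioc hn, prod_cons, loopFactor_one, neg_div, one_div, neg_mul]
  exact neg_le_neg (mul_le_of_le_one_right (inv_nonneg.2 ha.le) tail_le_one)

theorem sum_eq_mul_one_sub_prod_loopFactor (ha : 0 < a) (n : ℕ) :
    ∑ i ∈ Icc 1 n, a / ((a + 1) * (i : ℝ) - 1) *
        ∏ j ∈ Icc (i + 1) n, ((1 + a) * (j : ℝ) - 2 - a) / ((1 + a) * (j : ℝ) - 1)
      = a / (1 + a) * (1 - ∏ j ∈ Icc 1 n, loopFactor a j) := by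
  have summand : ∀ i ∈ Ioc 0 n, a / ((a + 1) * (i : ℝ) - 1) * ∏ j ∈ Ioc i n, loopFactor a j
      = a / (1 + a) * ((1 - loopFactor a i) * ∏ j ∈ Ioc i n, loopFactor a j) := fun i hi => by
    rw [one_sub_loopFactor ha (mem_Ioc.1 hi).1, add_comm a 1]
    field_simp
  have icc_one : Icc 1 n = Ioc 0 n := Icc_add_one_left_eq_Ioc 0 n
  simp_rw [Icc_add_one_left_eq_Ioc, icc_one]
  rw [← sum_one_sub_mul_prod_Ioc _ n.zero_le, mul_sum]
  exact sum_congr rfl summand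

end loopFactor

theorem expected_loop_degree_two_bounded (a : ℝ) (ha : 0 < a) :
    ∃ C : ℝ, ∀ n : ℕ, 1 ≤ n →
      ∑ i ∈ Finset.Icc 1 n, a / ((a + 1) * (i : ℝ) - 1) *
        ∏ j ∈ Finset.Icc (i + 1) n, ((1 + a) * (j : ℝ) - 2 - a) / ((1 + a) * (j : ℝ) - 1)
      ≤ C := by
  refine ⟨1, fun n _ => ?_⟩
  rw [sum_eq_mul_one_sub_prod_loopFactor ha n]
  have hprod := neg_inv_le_prod_loopFactor ha n
  calc a / (1 + a) * (1 - ∏ j ∈ Icc 1 n, loopFactor a j)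
      ≤ a / (1 + a) * (1 + a⁻¹) := by gcongr; linarith
    _ = 1 := by field_simp; ring
end
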